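/- arXiv:2011.09802 — 6 statements merged into one kernel-verified Lean document; each statement's English description precedes it below -/
import Mathlib

section
/- Let G : ℤ^d × ℤ^d → (0,∞) be translation invariant, a-submultiplicative for some a > 0, with sup_{x∈ℤ^d} G(0,x) < ∞, and invariant under lattice symmetries, i.e. G(0, σx) = G(0,x) for every signed permutation σ of the coordinates. For x ∈ ℤ^d \ {0} let ν_x = −lim_{n→∞} (1/n)·log G(0,n·x) (this limit exists), and set ν_0 = 0. Then: (i) ν_{k·x} = k·ν_x for every integer k ≥ 1; (ii) ν_{σx} = ν_x for every signed permutation σ of the coordinates (in particular ν_{−x} = ν_x); (iii) ν_{x+y} ≤ ν_x + ν_y for all x, y ∈ ℤ^d. Consequently, if ν_x > 0 for all x ≠ 0, then there exists a unique norm N on ℝ^d with N(x) = ν_x for all x ∈ ℤ^d. -/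
open Filter Topology

/-- The canonical embedding of `ℤ^d` into `ℝ^d`. -/
def ic {d : ℕ} (y : Fin d → ℤ) : Fin d → ℝ := fun i => (y i : ℝ)

private lemma aux_le_zero {x K : ℝ} (h : ∀ ε : ℝ, 0 < ε → x ≤ K * ε) : x ≤ 0 := by
  by_contra hx
  push_neg at hx
  have hK : 0 < K := by
    by_contra hK
    push_neg at hK
    have h1 := h 1 one_pos
    nlinarith
  have h2 := h (x / (2 * K)) (by positivity)
  have h3 : K * (x / (2 * K)) = x / 2 := by field_simp
  linarith [h3 ▸ h2]

private lemma aux_floor_abs (t : ℝ) : |(⌊t⌋:ℝ) - t| ≤ 1 := by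
  rw [abs_le]
  constructor
  · linarith [Int.sub_one_lt_floor t]
  · linarith [Int.floor_le t]

set_option maxHeartbeats 1000000 in
/-- Properties of the inverse correlation length `ν` of a
translation-invariant, submultiplicative, bounded, lattice-symmetric positive
two-point function: homogeneity, symmetry, subadditivity, and (when `ν > 0`
away from `0`) the existence of a unique norm on `ℝ^d` extending it. -/
theorem statement1 {d : ℕ} (hd : 1 ≤ d)
    (G : (Fin d → ℤ) → (Fin d → ℤ) → ℝ) (a : ℝ) (ha : 0 < a)
    (hpos : ∀ x y : Fin d → ℤ, 0 < G x y)
    (htrans : ∀ x y z : Fin d → ℤ, G (x + z) (y + z) = G x y)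
    (hsub : ∀ x y z : Fin d → ℤ, a * (G x z * G z y) ≤ G x y)
    (hbdd : ∃ M : ℝ, ∀ x : Fin d → ℤ, G 0 x ≤ M)
    (hsymm : ∀ (π : Equiv.Perm (Fin d)) (ε : Fin d → ℤ), (∀ i, ε i = 1 ∨ ε i = -1) →
      ∀ x : Fin d → ℤ, G 0 (fun i => ε i * x (π i)) = G 0 x)
    (ν : (Fin d → ℤ) → ℝ) (hν0 : ν 0 = 0)
    (hν : ∀ x : Fin d → ℤ, x ≠ 0 →
      Filter.Tendsto (fun n : ℕ => -(Real.log (G 0 ((n : ℤ) • x)) / (n : ℝ)))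
        Filter.atTop (nhds (ν x))) :
    (∀ x : Fin d → ℤ, ∀ k : ℕ, 1 ≤ k → ν ((k : ℤ) • x) = (k : ℝ) * ν x) ∧
    (∀ (π : Equiv.Perm (Fin d)) (ε : Fin d → ℤ), (∀ i, ε i = 1 ∨ ε i = -1) →
      ∀ x : Fin d → ℤ, ν (fun i => ε i * x (π i)) = ν x) ∧
    (∀ x y : Fin d → ℤ, ν (x + y) ≤ ν x + ν y) ∧
    ((∀ x : Fin d → ℤ, x ≠ 0 → 0 < ν x) →
      ∃! N : (Fin d → ℝ) → ℝ,
        ((∀ z : Fin d → ℝ, N z = 0 ↔ z = 0) ∧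
         (∀ (c : ℝ) (z : Fin d → ℝ), N (c • z) = |c| * N z) ∧
         (∀ z w : Fin d → ℝ, N (z + w) ≤ N z + N w)) ∧
        (∀ x : Fin d → ℤ, N (ic x) = ν x)) := by
  classical
  obtain ⟨M, hM⟩ := hbdd
  have hM0 : 0 < M := lt_of_lt_of_le (hpos 0 0) (hM 0)
  -- nonnegativity of ν
  have hνnn : ∀ x : Fin d → ℤ, 0 ≤ ν x := by
    intro x
    rcases eq_or_ne x 0 with rfl | hx
    · simp [hν0]
    · have h1 : Tendsto (fun n : ℕ => -(Real.log M / (n:ℝ))) atTop (𝓝 (0:ℝ)) := by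
        simpa using (tendsto_const_div_atTop_nhds_zero_nat (Real.log M)).neg
      refine le_of_tendsto_of_tendsto h1 (hν x hx) ?_
      filter_upwards [eventually_ge_atTop 1] with n hn
      have hn0 : (0:ℝ) < n := by exact_mod_cast hn
      have hlog : Real.log (G 0 ((n:ℤ) • x)) ≤ Real.log M :=
        Real.log_le_log (hpos _ _) (hM _)
      exact neg_le_neg ((div_le_div_iff_of_pos_right hn0).mpr hlog)
  -- Part (i): homogeneity
  have hmul : ∀ x : Fin d → ℤ, ∀ k : ℕ, 1 ≤ k → ν ((k : ℤ) • x) = (k : ℝ) * ν x := by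
    intro x k hk
    rcases eq_or_ne x 0 with rfl | hx
    · simp [hν0]
    · have hk0 : (k:ℤ) ≠ 0 := by exact_mod_cast Nat.one_le_iff_ne_zero.mp hk
      have hkx : ((k:ℤ) • x) ≠ 0 := smul_ne_zero hk0 hx
      have h1 := hν _ hkx
      have h2 : Tendsto (fun n : ℕ => n * k) atTop atTop :=
        tendsto_atTop_mono (fun n => Nat.le_mul_of_pos_right n hk) tendsto_id
      have h3 := (hν x hx).comp h2
      have h4 := h3.const_mul (k:ℝ)
      refine tendsto_nhds_unique h1 (Tendsto.congr' ?_ h4)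
      filter_upwards [eventually_ge_atTop 1] with n hn
      have hn0 : ((n:ℝ)) ≠ 0 := by positivity
      have hkR : ((k:ℝ)) ≠ 0 := by positivity
      have e : ((n:ℤ)) • ((k:ℤ) • x) = (((n*k : ℕ)):ℤ) • x := by
        push_cast
        rw [smul_smul]
      simp only [Function.comp]
      rw [e]
      push_cast
      field_simp
  -- Part (ii): lattice symmetry
  have hperm : ∀ (π : Equiv.Perm (Fin d)) (ε : Fin d → ℤ), (∀ i, ε i = 1 ∨ ε i = -1) →
      ∀ x : Fin d → ℤ, ν (fun i => ε i * x (π i)) = ν x := by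
    intro π ε hε x
    rcases eq_or_ne x 0 with rfl | hx
    · have e : (fun i => ε i * (0 : Fin d → ℤ) (π i)) = (0 : Fin d → ℤ) := by
        funext i; simp
      rw [e]
    · have hσx : (fun i => ε i * x (π i)) ≠ 0 := by
        intro h
        apply hx
        funext j
        show x j = 0
        have h1 := congrFun h (π.symm j)
        simp only [Equiv.apply_symm_apply, Pi.zero_apply] at h1
        rcases hε (π.symm j) with h2 | h2 <;> rw [h2] at h1 <;> omega
      refine tendsto_nhds_unique (hν _ hσx) (Tendsto.congr ?_ (hν x hx))
      intro n
      have e : ((n:ℤ) • fun i => ε i * x (π i)) = (fun i => ε i * ((n:ℤ) • x) (π i)) := by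
        funext i
        simp only [Pi.smul_apply, smul_eq_mul]
        ring
      rw [e, hsymm π ε hε ((n:ℤ) • x)]
  -- negation invariance
  have hneg : ∀ x : Fin d → ℤ, ν (-x) = ν x := by
    intro x
    have h := hperm (Equiv.refl _) (fun _ => -1) (fun _ => Or.inr rfl) x
    have e : (fun i => (-1 : ℤ) * x ((Equiv.refl (Fin d)) i)) = -x := by
      funext i; simp
    rwa [e] at h
  -- key submultiplicativity inequality
  have hGkey : ∀ x y : Fin d → ℤ, ∀ n : ℕ,
      a * (G 0 ((n:ℤ) • x) * G 0 ((n:ℤ) • y)) ≤ G 0 ((n:ℤ) • (x + y)) := by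
    intro x y n
    have h2 := htrans 0 ((n:ℤ) • y) ((n:ℤ) • x)
    rw [zero_add] at h2
    have e : (n:ℤ) • (x + y) = (n:ℤ) • y + (n:ℤ) • x := by rw [smul_add, add_comm]
    calc a * (G 0 ((n:ℤ) • x) * G 0 ((n:ℤ) • y))
        = a * (G 0 ((n:ℤ) • x) * G ((n:ℤ) • x) ((n:ℤ) • (x + y))) := by rw [e, h2]
      _ ≤ G 0 ((n:ℤ) • (x + y)) := hsub 0 _ _
  -- Part (iii): subadditivity
  have hadd : ∀ x y : Fin d → ℤ, ν (x + y) ≤ ν x + ν y := by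
    intro x y
    rcases eq_or_ne x 0 with rfl | hx
    · simp [hν0]
    rcases eq_or_ne y 0 with rfl | hy
    · simp [hν0]
    rcases eq_or_ne (x + y) 0 with hxy | hxy
    · rw [hxy, hν0]
      have hy' : y = -x := by
        have := hxy
        funext i
        have := congrFun hxy i
        simp only [Pi.add_apply, Pi.zero_apply] at this
        simp only [Pi.neg_apply]
        omega
      rw [hy', hneg]
      linarith [hνnn x]
    · have hR : Tendsto (fun n : ℕ =>
          -(Real.log (G 0 ((n:ℤ) • x)) / (n:ℝ)) + -(Real.log (G 0 ((n:ℤ) • y)) / (n:ℝ))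
            + -(Real.log a / (n:ℝ))) atTop (𝓝 (ν x + ν y + 0)) := by
        exact ((hν x hx).add (hν y hy)).add
          (by simpa using (tendsto_const_div_atTop_nhds_zero_nat (Real.log a)).neg)
      rw [add_zero] at hR
      refine le_of_tendsto_of_tendsto (hν _ hxy) hR ?_
      filter_upwards [eventually_ge_atTop 1] with n hn
      have hn0 : (0:ℝ) < n := by exact_mod_cast hn
      have hx0 := hpos 0 ((n:ℤ) • x)
      have hy0 := hpos 0 ((n:ℤ) • y)
      have hlog : Real.log a + Real.log (G 0 ((n:ℤ) • x)) + Real.log (G 0 ((n:ℤ) • y))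
          ≤ Real.log (G 0 ((n:ℤ) • (x + y))) := by
        have h1 : Real.log (a * (G 0 ((n:ℤ) • x) * G 0 ((n:ℤ) • y)))
            ≤ Real.log (G 0 ((n:ℤ) • (x + y))) :=
          Real.log_le_log (by positivity) (hGkey x y n)
        rw [Real.log_mul (ne_of_gt ha) (by positivity),
          Real.log_mul (ne_of_gt hx0) (ne_of_gt hy0)] at h1
        linarith
      calc -(Real.log (G 0 ((n:ℤ) • (x+y))) / (n:ℝ))
            ≤ -((Real.log a + Real.log (G 0 ((n:ℤ) • x)) + Real.log (G 0 ((n:ℤ) • y))) / (n:ℝ)) := by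
              exact neg_le_neg ((div_le_div_iff_of_pos_right hn0).mpr hlog)
          _ = -(Real.log (G 0 ((n:ℤ) • x)) / (n:ℝ)) + -(Real.log (G 0 ((n:ℤ) • y)) / (n:ℝ))
              + -(Real.log a / (n:ℝ)) := by ring
  refine ⟨hmul, hperm, hadd, ?_⟩
  -- Part (iv)
  intro hposν
  set i0 : Fin d := ⟨0, hd⟩ with hi0
  set c : ℝ := ν (Pi.single i0 1) with hcdef
  have hc0 : 0 ≤ c := hνnn _
  have hcpos : 0 < c := by
    apply hposν
    intro h
    have := congrFun h i0
    simp at this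
  -- all unit vectors have the same ν
  have hsingle1 : ∀ i : Fin d, ν (Pi.single i (1:ℤ)) = c := by
    intro i
    rw [hcdef]
    have h := hperm (Equiv.swap i i0) (fun _ => 1) (fun _ => Or.inl rfl) (Pi.single i0 1)
    rw [← h]
    congr 1
    funext j
    simp only [one_mul, Pi.single_apply]
    by_cases hj : j = i
    · subst hj
      simp [Equiv.swap_apply_left]
    · have : Equiv.swap i i0 j = i0 ↔ j = i := by
        rw [Equiv.apply_eq_iff_eq_symm_apply, Equiv.symm_swap, Equiv.swap_apply_right]
      simp [hj, this]
  have hsingleN : ∀ (i : Fin d) (m : ℕ), ν (Pi.single i (m:ℤ)) = (m:ℝ) * c := by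
    intro i m
    rcases Nat.eq_zero_or_pos m with rfl | hm
    · simp [hν0]
    · have e : Pi.single i ((m:ℕ):ℤ) = ((m:ℕ):ℤ) • (Pi.single i (1:ℤ) : Fin d → ℤ) := by
        rw [← Pi.single_smul' i ((m:ℕ):ℤ) 1, smul_eq_mul, mul_one]
      rw [e, hmul _ m hm, hsingle1]
  have hsingle : ∀ (i : Fin d) (m : ℤ), ν (Pi.single i m) = |(m:ℝ)| * c := by
    intro i m
    rcases le_or_gt 0 m with hm | hm
    · lift m to ℕ using hm
      rw [hsingleN, abs_of_nonneg (by positivity : (0:ℝ) ≤ (((m:ℕ):ℤ):ℝ))]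
      norm_num
    · rw [← hneg (Pi.single i m)]
      have e : -(Pi.single i m : Fin d → ℤ) = Pi.single i (-m) := by
        funext j
        simp only [Pi.neg_apply, Pi.single_apply]
        split <;> simp
      rw [e]
      have e2 : -m = (((-m).toNat : ℕ) : ℤ) := by omega
      rw [e2, hsingleN]
      congr 1
      have : ((((-m).toNat : ℕ)) : ℝ) = ((-m : ℤ) : ℝ) := by exact_mod_cast congrArg Int.cast e2.symm
      rw [this, abs_of_neg (by exact_mod_cast hm)]
      push_cast
      ring
  -- the ℓ¹ "norms"
  set S : (Fin d → ℤ) → ℝ := fun v => ∑ i, |((v i : ℤ) : ℝ)| with hSdef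
  set T : (Fin d → ℝ) → ℝ := fun v => ∑ i, |v i| with hTdef
  have hT0 : ∀ v, 0 ≤ T v := fun v => Finset.sum_nonneg fun i _ => abs_nonneg _
  have hupper : ∀ x : Fin d → ℤ, ν x ≤ c * S x := by
    intro x
    calc ν x = ν (∑ i, Pi.single i (x i)) := by rw [Finset.univ_sum_single]
      _ ≤ ∑ i, ν (Pi.single i (x i)) := Finset.le_sum_of_subadditive ν hν0.le hadd _ _
      _ = ∑ i, |((x i : ℤ):ℝ)| * c := Finset.sum_congr rfl fun i _ => hsingle i (x i)
      _ = c * S x := by rw [hSdef, Finset.mul_sum]; exact Finset.sum_congr rfl fun i _ => mul_comm _ _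
  have hlower : ∀ (x : Fin d → ℤ) (i : Fin d), c * |((x i : ℤ):ℝ)| ≤ ν x := by
    intro x i
    have hε : ∀ j, (if j = i then (1:ℤ) else -1) = 1 ∨ (if j = i then (1:ℤ) else -1) = -1 := by
      intro j; split <;> simp
    have hrefl := hperm (Equiv.refl _) (fun j => if j = i then (1:ℤ) else -1) hε x
    have h2 := hadd x (fun j => (if j = i then (1:ℤ) else -1) * x ((Equiv.refl (Fin d)) j))
    have hsum : (x + fun j => (if j = i then (1:ℤ) else -1) * x ((Equiv.refl (Fin d)) j))
        = Pi.single i (2 * x i) := by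
      funext j
      simp only [Pi.add_apply, Equiv.refl_apply, Pi.single_apply]
      by_cases hj : j = i
      · subst hj; simp; ring
      · simp [hj]
    rw [hsum, hrefl, hsingle] at h2
    have : |((2 * x i : ℤ):ℝ)| = 2 * |((x i : ℤ):ℝ)| := by
      push_cast
      rw [abs_mul]
      simp
    rw [this] at h2
    linarith
  have hlipZ : ∀ x y : Fin d → ℤ, ν x ≤ ν y + c * S (x - y) := by
    intro x y
    have h1 := hadd y (x - y)
    have e : y + (x - y) = x := by abel
    rw [e] at h1
    linarith [hupper (x - y)]
  -- real-side approximating sequence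
  set fl : (Fin d → ℝ) → ℕ → (Fin d → ℤ) := fun z n => fun i => ⌊(n:ℝ) * z i⌋ with hfldef
  set u : (Fin d → ℝ) → ℕ → ℝ := fun z n => ν (fl z n) / (n:ℝ) with hudef
  -- key uniform estimate
  have hE : ∀ (z w : Fin d → ℝ) (n m : ℕ), 1 ≤ n → 1 ≤ m →
      u z n - u w m ≤ c * T (z - w) + c * d / n + c * d / m := by
    intro z w n m hn hm
    have hn0 : (0:ℝ) < n := by exact_mod_cast hn
    have hm0 : (0:ℝ) < m := by exact_mod_cast hm
    have h1 : ν ((m:ℤ) • fl z n) = (m:ℝ) * ν (fl z n) := hmul _ m hm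
    have h2 : ν ((n:ℤ) • fl w m) = (n:ℝ) * ν (fl w m) := hmul _ n hn
    have h3 := hlipZ ((m:ℤ) • fl z n) ((n:ℤ) • fl w m)
    have hS : S ((m:ℤ) • fl z n - (n:ℤ) • fl w m) ≤ (n:ℝ) * m * T (z - w) + ((n:ℝ) + m) * d := by
      rw [hSdef]
      have hbound : ∀ i : Fin d, |((((m:ℤ) • fl z n - (n:ℤ) • fl w m) i : ℤ) : ℝ)|
          ≤ (n:ℝ) * m * |z i - w i| + ((n:ℝ) + m) := by
        intro i
        have f1 := aux_floor_abs ((n:ℝ) * z i)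
        have f2 := aux_floor_abs ((m:ℝ) * w i)
        have e : ((((m:ℤ) • fl z n - (n:ℤ) • fl w m) i : ℤ) : ℝ)
            = (m:ℝ) * ((⌊(n:ℝ) * z i⌋ : ℝ) - (n:ℝ) * z i)
              + (n:ℝ) * m * (z i - w i)
              + (n:ℝ) * ((m:ℝ) * w i - (⌊(m:ℝ) * w i⌋ : ℝ)) := by
          simp only [hfldef, Pi.sub_apply, Pi.smul_apply, smul_eq_mul]
          push_cast
          ring
        rw [e]
        have t1 : |(m:ℝ) * ((⌊(n:ℝ) * z i⌋ : ℝ) - (n:ℝ) * z i)| ≤ (m:ℝ) := by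
          rw [abs_mul, abs_of_pos hm0]
          nlinarith
        have t2 : |(n:ℝ) * m * (z i - w i)| = (n:ℝ) * m * |z i - w i| := by
          rw [abs_mul, abs_of_pos (by positivity)]
        have t3 : |(n:ℝ) * ((m:ℝ) * w i - (⌊(m:ℝ) * w i⌋ : ℝ))| ≤ (n:ℝ) := by
          rw [abs_mul, abs_of_pos hn0, abs_sub_comm]
          nlinarith
        calc |(m:ℝ) * ((⌊(n:ℝ) * z i⌋ : ℝ) - (n:ℝ) * z i) + (n:ℝ) * m * (z i - w i)
              + (n:ℝ) * ((m:ℝ) * w i - (⌊(m:ℝ) * w i⌋ : ℝ))|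
            ≤ |(m:ℝ) * ((⌊(n:ℝ) * z i⌋ : ℝ) - (n:ℝ) * z i) + (n:ℝ) * m * (z i - w i)|
              + |(n:ℝ) * ((m:ℝ) * w i - (⌊(m:ℝ) * w i⌋ : ℝ))| := abs_add_le _ _
          _ ≤ |(m:ℝ) * ((⌊(n:ℝ) * z i⌋ : ℝ) - (n:ℝ) * z i)| + |(n:ℝ) * m * (z i - w i)|
              + |(n:ℝ) * ((m:ℝ) * w i - (⌊(m:ℝ) * w i⌋ : ℝ))| := by
                linarith [abs_add_le ((m:ℝ) * ((⌊(n:ℝ) * z i⌋ : ℝ) - (n:ℝ) * z i))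
                  ((n:ℝ) * m * (z i - w i))]
          _ ≤ (n:ℝ) * m * |z i - w i| + ((n:ℝ) + m) := by rw [t2]; linarith
      calc (∑ i, |((((m:ℤ) • fl z n - (n:ℤ) • fl w m) i : ℤ) : ℝ)|)
          ≤ ∑ i, ((n:ℝ) * m * |z i - w i| + ((n:ℝ) + m)) :=
            Finset.sum_le_sum fun i _ => hbound i
        _ = (n:ℝ) * m * T (z - w) + ((n:ℝ) + m) * d := by
            rw [Finset.sum_add_distrib, Finset.sum_const, hTdef, Finset.mul_sum]
            simp only [Finset.card_univ, Fintype.card_fin, nsmul_eq_mul]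
            have : ∀ i : Fin d, (z - w) i = z i - w i := fun i => rfl
            simp only [this]
            ring
    have h4 : (m:ℝ) * ν (fl z n) - (n:ℝ) * ν (fl w m)
        ≤ c * ((n:ℝ) * m * T (z - w) + ((n:ℝ) + m) * d) := by
      rw [← h1, ← h2]
      nlinarith [mul_le_mul_of_nonneg_left hS hc0]
    have e : u z n - u w m = ((m:ℝ) * ν (fl z n) - (n:ℝ) * ν (fl w m)) / ((n:ℝ) * m) := by
      rw [hudef]
      field_simp
    rw [e, div_le_iff₀ (by positivity)]
    calc (m:ℝ) * ν (fl z n) - (n:ℝ) * ν (fl w m)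
        ≤ c * ((n:ℝ) * m * T (z - w) + ((n:ℝ) + m) * d) := h4
      _ = (c * T (z - w) + c * d / n + c * d / m) * ((n:ℝ) * m) := by
          field_simp
          ring
  -- convergence of the approximating sequence
  have hconv : ∀ z : Fin d → ℝ, ∃ L : ℝ, Tendsto (fun n => u z n) atTop (𝓝 L) := by
    intro z
    have hTzz : T (z - z) = 0 := by
      rw [hTdef]
      simp
    have hC : CauchySeq (fun n : ℕ => u z (n + 1)) := by
      apply cauchySeq_of_le_tendsto_0 (fun N : ℕ => 2 * (c * d) / ((N:ℝ) + 1))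
      · intro n m N hn hm
        have b1 : c * d / ((n:ℕ)+1:ℝ) ≤ c * d / ((N:ℝ)+1) := by
          apply div_le_div_of_nonneg_left (by positivity) (by positivity)
          exact_mod_cast Nat.succ_le_succ hn
        have b2 : c * d / ((m:ℕ)+1:ℝ) ≤ c * d / ((N:ℝ)+1) := by
          apply div_le_div_of_nonneg_left (by positivity) (by positivity)
          exact_mod_cast Nat.succ_le_succ hm
        have e1 := hE z z (n+1) (m+1) (by omega) (by omega)
        have e2 := hE z z (m+1) (n+1) (by omega) (by omega)
        rw [hTzz] at e1 e2
        rw [Real.dist_eq, abs_le]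
        push_cast at e1 e2 ⊢
        have b3 : c * (d:ℝ) / ((N:ℝ)+1) + c * (d:ℝ) / ((N:ℝ)+1) = 2 * (c * (d:ℝ)) / ((N:ℝ)+1) := by
          ring
        constructor <;> linarith
      · have h := (tendsto_const_div_atTop_nhds_zero_nat (2 * (c * d))).comp
          (tendsto_add_atTop_nat 1)
        convert h using 2 with n
        push_cast [Function.comp]
        norm_num
    obtain ⟨L, hL⟩ := cauchySeq_tendsto_of_complete hC
    exact ⟨L, (tendsto_add_atTop_iff_nat 1).mp hL⟩
  choose NN hNN using hconv
  -- NN agrees with ν on lattice points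
  have hint0 : ∀ x : Fin d → ℤ, NN (ic x) = ν x := by
    intro x
    refine tendsto_nhds_unique (hNN (ic x)) ?_
    have hev : ∀ᶠ n : ℕ in atTop, (fun _ : ℕ => ν x) n = u (ic x) n := by
      filter_upwards [eventually_ge_atTop 1] with n hn
      have hn0 : ((n:ℝ)) ≠ 0 := by positivity
      have e : fl (ic x) n = (n:ℤ) • x := by
        funext i
        show ⌊(n:ℝ) * ((x i : ℤ):ℝ)⌋ = (n:ℤ) * x i
        rw [show (n:ℝ) * ((x i:ℤ):ℝ) = (((n:ℤ) * x i : ℤ) : ℝ) by push_cast; ring,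
          Int.floor_intCast]
      show ν x = ν (fl (ic x) n) / (n:ℝ)
      rw [e, hmul x n hn]
      field_simp
    exact Tendsto.congr' hev tendsto_const_nhds
  have hNNnn : ∀ z, 0 ≤ NN z := by
    intro z
    refine ge_of_tendsto (hNN z) ?_
    filter_upwards with n
    exact div_nonneg (hνnn _) (Nat.cast_nonneg n)
  -- Lipschitz property
  have hlip : ∀ z w, NN z ≤ NN w + c * T (z - w) := by
    intro z w
    have hR : Tendsto (fun n : ℕ => u w n + c * T (z - w) + 2 * (c * d) / n) atTop
        (𝓝 (NN w + c * T (z - w) + 0)) :=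
      ((hNN w).add tendsto_const_nhds).add (tendsto_const_div_atTop_nhds_zero_nat _)
    rw [add_zero] at hR
    refine le_of_tendsto_of_tendsto (hNN z) hR ?_
    filter_upwards [eventually_ge_atTop 1] with n hn
    have := hE z w n n hn hn
    have e : c * (d:ℝ) / (n:ℝ) + c * (d:ℝ) / (n:ℝ) = 2 * (c * (d:ℝ)) / (n:ℝ) := by ring
    linarith
  have hNN0 : NN 0 = 0 := by
    refine tendsto_nhds_unique (hNN 0) ?_
    have hday : ∀ n : ℕ, (fun _ : ℕ => (0:ℝ)) n = u 0 n := by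
      intro n
      show (0:ℝ) = ν (fl 0 n) / (n:ℝ)
      have e : fl 0 n = 0 := by
        funext i
        show ⌊(n:ℝ) * (0 : Fin d → ℝ) i⌋ = 0
        simp
      rw [e, hν0, zero_div]
    exact Tendsto.congr hday tendsto_const_nhds
  -- subadditivity
  have hNNadd : ∀ z w, NN (z + w) ≤ NN z + NN w := by
    intro z w
    have hR : Tendsto (fun n : ℕ => u z n + u w n + c * (3 * d) / n) atTop
        (𝓝 (NN z + NN w + 0)) :=
      ((hNN z).add (hNN w)).add (tendsto_const_div_atTop_nhds_zero_nat _)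
    rw [add_zero] at hR
    refine le_of_tendsto_of_tendsto (hNN (z + w)) hR ?_
    filter_upwards [eventually_ge_atTop 1] with n hn
    have hn0 : (0:ℝ) < n := by exact_mod_cast hn
    have h1 := hlipZ (fl (z + w) n) (fl z n + fl w n)
    have h2 := hadd (fl z n) (fl w n)
    have hS3 : S (fl (z + w) n - (fl z n + fl w n)) ≤ 3 * d := by
      rw [hSdef]
      calc (∑ i, |(((fl (z + w) n - (fl z n + fl w n)) i : ℤ):ℝ)|) ≤ ∑ _i : Fin d, (3:ℝ) := by
            apply Finset.sum_le_sum
            intro i _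
            have f1 := aux_floor_abs ((n:ℝ) * (z + w) i)
            have f2 := aux_floor_abs ((n:ℝ) * z i)
            have f3 := aux_floor_abs ((n:ℝ) * w i)
            have e : (((fl (z + w) n - (fl z n + fl w n)) i : ℤ):ℝ)
                = ((⌊(n:ℝ) * (z+w) i⌋:ℝ) - (n:ℝ) * (z+w) i)
                  - ((⌊(n:ℝ) * z i⌋:ℝ) - (n:ℝ) * z i)
                  - ((⌊(n:ℝ) * w i⌋:ℝ) - (n:ℝ) * w i) := by
              show ((⌊(n:ℝ) * (z+w) i⌋ - (⌊(n:ℝ) * z i⌋ + ⌊(n:ℝ) * w i⌋) : ℤ):ℝ) = _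
              have ezw : (z + w) i = z i + w i := rfl
              push_cast
              rw [ezw]
              ring
            rw [e]
            have g1 := abs_le.mp f1
            have g2 := abs_le.mp f2
            have g3 := abs_le.mp f3
            rw [abs_le]
            constructor <;> [linarith; linarith]
        _ = 3 * d := by
            rw [Finset.sum_const, Finset.card_univ, Fintype.card_fin, nsmul_eq_mul]
            ring
    have hν3 : ν (fl (z+w) n) ≤ ν (fl z n) + ν (fl w n) + c * (3 * d) := by
      have h4 := mul_le_mul_of_nonneg_left hS3 hc0
      calc ν (fl (z+w) n) ≤ ν (fl z n + fl w n) + c * S (fl (z + w) n - (fl z n + fl w n)) := h1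
        _ ≤ ν (fl z n) + ν (fl w n) + c * (3 * (d:ℝ)) := by linarith
    show ν (fl (z+w) n) / (n:ℝ) ≤ ν (fl z n)/(n:ℝ) + ν (fl w n)/(n:ℝ) + c * (3*(d:ℝ))/(n:ℝ)
    calc ν (fl (z+w) n) / (n:ℝ) ≤ (ν (fl z n) + ν (fl w n) + c * (3*(d:ℝ))) / (n:ℝ) :=
          (div_le_div_iff_of_pos_right hn0).mpr hν3
      _ = ν (fl z n)/(n:ℝ) + ν (fl w n)/(n:ℝ) + c * (3*(d:ℝ))/(n:ℝ) := by ring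
  -- symmetry under negation
  have hNNneg : ∀ z, NN (-z) = NN z := by
    have key : ∀ (z : Fin d → ℝ) (n : ℕ), 1 ≤ n → u (-z) n ≤ u z n + c * (2 * d) / n := by
      intro z n hn
      have hn0 : (0:ℝ) < n := by exact_mod_cast hn
      have h1 : ν (fl (-z) n) = ν (-(fl (-z) n)) := (hneg _).symm
      have h2 := hlipZ (-(fl (-z) n)) (fl z n)
      have hS2 : S (-(fl (-z) n) - fl z n) ≤ 2 * d := by
        rw [hSdef]
        calc (∑ i, |(((-(fl (-z) n) - fl z n) i : ℤ):ℝ)|) ≤ ∑ _i : Fin d, (2:ℝ) := by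
              apply Finset.sum_le_sum
              intro i _
              have f1 := aux_floor_abs ((n:ℝ) * (-z) i)
              have f2 := aux_floor_abs ((n:ℝ) * z i)
              have e : (((-(fl (-z) n) - fl z n) i : ℤ):ℝ)
                  = -((⌊(n:ℝ) * (-z) i⌋:ℝ) - (n:ℝ) * (-z) i)
                    - ((⌊(n:ℝ) * z i⌋:ℝ) - (n:ℝ) * z i) := by
                show ((-(⌊(n:ℝ) * (-z) i⌋) - ⌊(n:ℝ) * z i⌋ : ℤ):ℝ) = _
                have ez : (-z) i = -(z i) := rfl
                push_cast
                rw [ez]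
                ring
              rw [e]
              have g1 := abs_le.mp f1
              have g2 := abs_le.mp f2
              rw [abs_le]
              constructor <;> [linarith; linarith]
          _ = 2 * d := by
              rw [Finset.sum_const, Finset.card_univ, Fintype.card_fin, nsmul_eq_mul]
              ring
      have h3 : ν (fl (-z) n) ≤ ν (fl z n) + c * (2 * (d:ℝ)) := by
        have h4 := mul_le_mul_of_nonneg_left hS2 hc0
        rw [h1]
        linarith
      show ν (fl (-z) n) / (n:ℝ) ≤ ν (fl z n)/(n:ℝ) + c * (2*(d:ℝ))/(n:ℝ)
      calc ν (fl (-z) n) / (n:ℝ) ≤ (ν (fl z n) + c * (2*(d:ℝ))) / (n:ℝ) :=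
            (div_le_div_iff_of_pos_right hn0).mpr h3
        _ = ν (fl z n)/(n:ℝ) + c * (2*(d:ℝ))/(n:ℝ) := by ring
    have keylim : ∀ z : Fin d → ℝ, NN (-z) ≤ NN z := by
      intro z
      have hR : Tendsto (fun n : ℕ => u z n + c * (2 * d) / n) atTop (𝓝 (NN z + 0)) :=
        (hNN z).add (tendsto_const_div_atTop_nhds_zero_nat _)
      rw [add_zero] at hR
      refine le_of_tendsto_of_tendsto (hNN (-z)) hR ?_
      filter_upwards [eventually_ge_atTop 1] with n hn
      exact key z n hn
    intro z
    have h1 := keylim z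
    have h2 := keylim (-z)
    rw [neg_neg] at h2
    linarith
  -- lower bound
  have hNNlow : ∀ (z : Fin d → ℝ) (i : Fin d), c * |z i| ≤ NN z := by
    intro z i
    have hL : Tendsto (fun n : ℕ => c * |z i| - c / n) atTop (𝓝 (c * |z i| - 0)) :=
      tendsto_const_nhds.sub (tendsto_const_div_atTop_nhds_zero_nat c)
    rw [sub_zero] at hL
    refine le_of_tendsto_of_tendsto hL (hNN z) ?_
    filter_upwards [eventually_ge_atTop 1] with n hn
    have hn0 : (0:ℝ) < n := by exact_mod_cast hn
    have h1 := hlower (fl z n) i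
    have f1 := aux_floor_abs ((n:ℝ) * z i)
    have h2 : (n:ℝ) * |z i| - 1 ≤ |((fl z n i : ℤ):ℝ)| := by
      have e : ((fl z n i : ℤ):ℝ) = (⌊(n:ℝ) * z i⌋ : ℝ) := rfl
      rw [e]
      have habs := abs_sub_abs_le_abs_sub ((n:ℝ) * z i) ((⌊(n:ℝ) * z i⌋:ℝ))
      rw [abs_sub_comm] at habs
      rw [abs_mul, abs_of_pos hn0] at habs
      linarith
    show c * |z i| - c / n ≤ ν (fl z n) / (n:ℝ)
    rw [sub_le_iff_le_add, ← add_div, le_div_iff₀ hn0]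
    nlinarith [mul_le_mul_of_nonneg_left h2 hc0, h1]
  -- positive homogeneity for natural scalars
  have hNNnsmul : ∀ (k : ℕ) (z : Fin d → ℝ), NN ((k:ℝ) • z) = (k:ℝ) * NN z := by
    intro k z
    rcases Nat.eq_zero_or_pos k with rfl | hk
    · simp only [Nat.cast_zero, zero_smul, zero_mul]
      exact hNN0
    · have h2 : Tendsto (fun n : ℕ => n * k) atTop atTop :=
        tendsto_atTop_mono (fun n => Nat.le_mul_of_pos_right n hk) tendsto_id
      have h4 := ((hNN z).comp h2).const_mul (k:ℝ)
      refine tendsto_nhds_unique (hNN ((k:ℝ) • z)) (Tendsto.congr' ?_ h4)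
      filter_upwards [eventually_ge_atTop 1] with n hn
      have hn0 : ((n:ℝ)) ≠ 0 := by positivity
      have hk0 : ((k:ℝ)) ≠ 0 := by positivity
      show (k:ℝ) * (ν (fl z (n * k)) / ((n*k : ℕ):ℝ)) = ν (fl ((k:ℝ) • z) n) / (n:ℝ)
      have e : fl ((k:ℝ) • z) n = fl z (n * k) := by
        funext i
        show ⌊(n:ℝ) * ((k:ℝ) • z) i⌋ = ⌊((n*k : ℕ):ℝ) * z i⌋
        have : (n:ℝ) * ((k:ℝ) • z) i = ((n*k : ℕ):ℝ) * z i := by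
          show (n:ℝ) * ((k:ℝ) * z i) = _
          push_cast
          ring
        rw [this]
      rw [e]
      push_cast
      field_simp
  have hNNrat : ∀ (p q : ℕ), 1 ≤ q → ∀ z : Fin d → ℝ,
      NN (((p:ℝ)/(q:ℝ)) • z) = ((p:ℝ)/(q:ℝ)) * NN z := by
    intro p q hq z
    have hq0 : ((q:ℝ)) ≠ 0 := by positivity
    have h1 : NN z = q * NN (((q:ℝ)⁻¹) • z) := by
      rw [← hNNnsmul q (((q:ℝ)⁻¹) • z), smul_smul, mul_inv_cancel₀ hq0, one_smul]
    have h3 : NN (((q:ℝ)⁻¹) • z) = NN z / q := by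
      rw [h1]
      field_simp
    have h2 : ((p:ℝ)/(q:ℝ)) • z = (p:ℝ) • (((q:ℝ)⁻¹) • z) := by
      rw [smul_smul, div_eq_mul_inv]
    rw [h2, hNNnsmul p, h3]
    ring
  -- full homogeneity
  have hNNsmul : ∀ (c' : ℝ) (z : Fin d → ℝ), NN (c' • z) = |c'| * NN z := by
    have key : ∀ (c' : ℝ), 0 < c' → ∀ z : Fin d → ℝ, NN (c' • z) = c' * NN z := by
      intro c' hc' z
      have habs : |NN (c' • z) - c' * NN z| ≤ 0 := by
        apply aux_le_zero (K := c * T z + NN z)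
        intro ε hε
        obtain ⟨r, hr1, hr2⟩ := exists_rat_btwn (lt_add_of_pos_right c' hε)
        have hr0 : (0:ℝ) < (r:ℝ) := lt_trans hc' hr1
        have hrq : 0 < r := by exact_mod_cast hr0
        have hrcast : ((r.num.toNat : ℕ):ℝ) / ((r.den : ℕ):ℝ) = (r:ℝ) := by
          rw [Rat.cast_def]
          congr 1
          exact_mod_cast Int.toNat_of_nonneg (Rat.num_nonneg.mpr hrq.le)
        have hNr : NN ((r:ℝ) • z) = (r:ℝ) * NN z := by
          rw [← hrcast, hNNrat _ _ r.pos]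
        have hT1 : T (c' • z - (r:ℝ) • z) = |c' - (r:ℝ)| * T z := by
          rw [hTdef, Finset.mul_sum]
          refine Finset.sum_congr rfl fun i _ => ?_
          have e : (c' • z - (r:ℝ) • z) i = (c' - (r:ℝ)) * z i := by
            show c' * z i - (r:ℝ) * z i = _
            ring
          rw [e, abs_mul]
        have hT2 : T ((r:ℝ) • z - c' • z) = |c' - (r:ℝ)| * T z := by
          rw [hTdef, Finset.mul_sum]
          refine Finset.sum_congr rfl fun i _ => ?_
          have e : ((r:ℝ) • z - c' • z) i = ((r:ℝ) - c') * z i := by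
            show (r:ℝ) * z i - c' * z i = _
            ring
          rw [e, abs_mul, abs_sub_comm]
        have l1 := hlip (c' • z) ((r:ℝ) • z)
        have l2 := hlip ((r:ℝ) • z) (c' • z)
        rw [hT1, hNr] at l1
        rw [hT2, hNr] at l2
        have hd1 : |c' - (r:ℝ)| ≤ ε := by
          rw [abs_of_nonpos (by linarith)]
          linarith
        have hNz := hNNnn z
        have hTz := hT0 z
        have m1 : c * (|c' - (r:ℝ)| * T z) ≤ c * T z * ε := by
          nlinarith [mul_le_mul_of_nonneg_left hd1 (mul_nonneg hc0 hTz)]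
        have m2 : |(r:ℝ) - c'| ≤ ε := by rw [abs_of_nonneg (by linarith)]; linarith
        rw [abs_le]
        constructor
        · nlinarith
        · nlinarith
      have := abs_nonneg (NN (c' • z) - c' * NN z)
      have h0 : NN (c' • z) - c' * NN z = 0 := by
        rw [← abs_eq_zero]
        linarith
      linarith
    intro c' z
    rcases lt_trichotomy c' 0 with h | h | h
    · have e : -((-c') • z) = c' • z := by
        rw [neg_smul, neg_neg]
      calc NN (c' • z) = NN (-((-c') • z)) := by rw [e]
        _ = NN ((-c') • z) := hNNneg _
        _ = (-c') * NN z := key (-c') (by linarith) z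
        _ = |c'| * NN z := by rw [abs_of_neg h]
    · subst h
      simp only [zero_smul, abs_zero, zero_mul]
      exact hNN0
    · rw [key c' h z, abs_of_pos h]
  -- assemble
  refine ⟨NN, ⟨⟨?_, hNNsmul, hNNadd⟩, hint0⟩, ?_⟩
  · intro z
    constructor
    · intro h
      by_contra hz
      obtain ⟨i, hi⟩ := Function.ne_iff.mp hz
      simp only [Pi.zero_apply] at hi
      have h1 := hNNlow z i
      have h2 : 0 < c * |z i| := mul_pos hcpos (abs_pos.mpr hi)
      linarith
    · rintro rfl
      exact hNN0
  · rintro N' ⟨⟨hz', hsm', hadd'⟩, hint'⟩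
    funext z
    have hN'0 : N' 0 = 0 := (hz' 0).mpr rfl
    have hN'neg : ∀ v : Fin d → ℝ, N' (-v) = N' v := by
      intro v
      have h := hsm' (-1) v
      rw [neg_one_smul] at h
      simpa using h
    have hN'nn : ∀ v : Fin d → ℝ, 0 ≤ N' v := by
      intro v
      have h := hadd' v (-v)
      rw [add_neg_cancel, hN'0, hN'neg] at h
      linarith
    set K' : ℝ := ∑ i, N' (Pi.single i (1:ℝ)) with hK'
    have hN'sum : ∀ v : Fin d → ℝ, N' v ≤ ∑ i, |v i| * N' (Pi.single i (1:ℝ)) := by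
      intro v
      calc N' v = N' (∑ i, Pi.single i (v i)) := by rw [Finset.univ_sum_single]
        _ ≤ ∑ i, N' (Pi.single i (v i)) := Finset.le_sum_of_subadditive N' hN'0.le hadd' _ _
        _ = ∑ i, |v i| * N' (Pi.single i 1) := by
            refine Finset.sum_congr rfl fun i _ => ?_
            rw [← hsm' (v i) (Pi.single i 1)]
            congr 1
            funext j
            by_cases hj : j = i
            · subst hj
              simp
            · simp [Pi.single_apply, hj]
    have hmain : Tendsto (fun n => u z n) atTop (𝓝 (N' z)) := by
      have hb : ∀ᶠ n : ℕ in atTop, ‖u z n - N' z‖ ≤ K' / n := by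
        filter_upwards [eventually_ge_atTop 1] with n hn
        have hn0 : (0:ℝ) < n := by exact_mod_cast hn
        set wn : Fin d → ℝ := ((n:ℝ)⁻¹) • ic (fl z n) with hwn
        have hwval : N' wn = u z n := by
          rw [hwn, hsm', hint', abs_of_pos (by positivity)]
          show (n:ℝ)⁻¹ * ν (fl z n) = ν (fl z n) / (n:ℝ)
          rw [div_eq_mul_inv]
          ring
        have hdiff : ∀ j, |(z - wn) j| ≤ 1 / n := by
          intro j
          have f1 := aux_floor_abs ((n:ℝ) * z j)
          have e : (z - wn) j = -(((⌊(n:ℝ) * z j⌋:ℝ) - (n:ℝ) * z j) / n) := by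
            show z j - (n:ℝ)⁻¹ * ((⌊(n:ℝ) * z j⌋ : ℤ):ℝ) = _
            field_simp
            ring
          rw [e, abs_neg, abs_div, abs_of_pos hn0]
          exact (div_le_div_iff_of_pos_right hn0).mpr f1
        have h1 : N' z ≤ N' wn + N' (z - wn) := by
          have h := hadd' wn (z - wn)
          have e : wn + (z - wn) = z := by abel
          rw [e] at h
          exact h
        have h2 : N' wn ≤ N' z + N' (z - wn) := by
          have h := hadd' z (wn - z)
          have e : z + (wn - z) = wn := by abel
          rw [e] at h
          have e2 : wn - z = -(z - wn) := by abel
          rw [e2, hN'neg] at h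
          exact h
        have h3 : N' (z - wn) ≤ K' / n := by
          calc N' (z - wn) ≤ ∑ i, |(z - wn) i| * N' (Pi.single i (1:ℝ)) := hN'sum _
            _ ≤ ∑ i, (1/(n:ℝ)) * N' (Pi.single i (1:ℝ)) := by
                refine Finset.sum_le_sum fun i _ => ?_
                exact mul_le_mul_of_nonneg_right (hdiff i) (hN'nn _)
            _ = K' / n := by
                rw [hK', Finset.sum_div]
                refine Finset.sum_congr rfl fun i _ => by ring
        rw [Real.norm_eq_abs, abs_le]
        constructor <;> [linarith; linarith]
      have h0 : Tendsto (fun n : ℕ => u z n - N' z) atTop (𝓝 0) :=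
        squeeze_zero_norm' hb (tendsto_const_div_atTop_nhds_zero_nat K')
      have h5 := h0.add (tendsto_const_nhds (x := N' z) (f := atTop))
      rw [zero_add] at h5
      refine Tendsto.congr (fun n => by ring) h5
    exact tendsto_nhds_unique hmain (hNN z)
end

section
/- Let G : ℤ^d × ℤ^d → (0,∞) be translation invariant, a-submultiplicative for some a > 0, with sup_{x∈ℤ^d} G(0,x) < ∞, and invariant under lattice symmetries (G(0, σx) = G(0,x) for every signed permutation σ of the coordinates). For z ∈ ℤ^d \ {0} let ν_z = −lim_{n→∞} (1/n)·log G(0, n·z) (this limit exists). Then for all x, y ∈ ℤ^d \ {0}: ν_x/‖x‖₂ ≤ d·ν_y/‖y‖₂, where ‖·‖₂ denotes the Euclidean norm. In particular, the maximal and minimal values of the normalized inverse correlation length over directions differ by at most a factor d. -/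
/-!
The decay rate `ν` of `G(0, ·)` along rays is subadditive (by submultiplicativity), homogeneous
(pass to the subsequence `n k`) and invariant under signed permutations; as `ν (-z) = ν z` and
`ν 0 = 0`, subadditivity also gives `ν ≥ 0`. Such a `ν` is squeezed between multiples of the `ℓ¹`
and `ℓ^∞` norms: with `c = ν(eᵢ)`, `ν x ≤ c ‖x‖₁` by subadditivity, and `2 |yᵢ| c = ν (y + y') ≤ 2 ν y`,
where `y'` is `y` reflected in every coordinate but the `i`-th. Comparing both with `‖·‖₂` costs a
factor `√d` each.
-/

open Filter Topology

/-- Euclidean norm of a point of `ℤ^d`. -/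
noncomputable def enorm2 {d : ℕ} (x : Fin d → ℤ) : ℝ := Real.sqrt (∑ i, ((x i : ℝ)) ^ 2)

section DecayRate

variable {E : Type*} [AddCommGroup E] {f : E → ℝ} {a c c₁ c₂ : ℝ} {x y z : E}

def HasDecayRate (f : E → ℝ) (z : E) (c : ℝ) : Prop :=
  Tendsto (fun n : ℕ => -(Real.log (f ((n : ℤ) • z)) / (n : ℝ))) atTop (𝓝 c)

theorem HasDecayRate.unique (h₁ : HasDecayRate f z c₁) (h₂ : HasDecayRate f z c₂) : c₁ = c₂ :=
  tendsto_nhds_unique h₁ h₂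

theorem hasDecayRate_zero (f : E → ℝ) : HasDecayRate f 0 0 := by
  simpa [HasDecayRate] using (tendsto_const_div_atTop_nhds_zero_nat (Real.log (f 0))).neg

theorem HasDecayRate.le_add (ha : 0 < a) (hpos : ∀ u, 0 < f u)
    (hf : ∀ u v, a * (f u * f v) ≤ f (u + v))
    (hx : HasDecayRate f x c₁) (hy : HasDecayRate f y c₂) (hxy : HasDecayRate f (x + y) c) :
    c ≤ c₁ + c₂ := by
  have hlim := (tendsto_const_div_atTop_nhds_zero_nat (-Real.log a)).add (hx.add hy)
  rw [zero_add] at hlim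
  refine le_of_tendsto_of_tendsto' hxy hlim fun n => ?_
  have hlog : Real.log a + (Real.log (f ((n : ℤ) • x)) + Real.log (f ((n : ℤ) • y))) ≤
      Real.log (f ((n : ℤ) • (x + y))) := by
    rw [← Real.log_mul (hpos _).ne' (hpos _).ne',
      ← Real.log_mul ha.ne' (mul_pos (hpos _) (hpos _)).ne', smul_add]
    exact Real.log_le_log (mul_pos ha (mul_pos (hpos _) (hpos _))) (hf _ _)
  have := div_le_div_of_nonneg_right hlog n.cast_nonneg
  rw [add_div, add_div] at this
  simp only [neg_div]
  linarith

theorem HasDecayRate.nsmul (hz : HasDecayRate f z c) (k : ℕ) :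
    HasDecayRate f (k • z) (k * c) := by
  rcases k.eq_zero_or_pos with rfl | hk
  · simpa using hasDecayRate_zero f
  have hmul : Tendsto (fun n : ℕ => n * k) atTop atTop := tendsto_id.atTop_mul_const' hk
  refine ((hz.comp hmul).const_mul (k : ℝ)).congr' ?_
  filter_upwards [eventually_ge_atTop 1] with n hn
  have hn' : (n : ℝ) ≠ 0 := by positivity
  have hk' : (k : ℝ) ≠ 0 := by positivity
  simp only [Function.comp_apply, Nat.cast_mul]
  rw [mul_comm, mul_smul, natCast_zsmul z k]
  field_simp

theorem HasDecayRate.map (σ : E →+ E) (hσ : ∀ u, f (σ u) = f u) (hz : HasDecayRate f z c) :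
    HasDecayRate f (σ z) c := by
  simpa only [HasDecayRate, ← map_zsmul σ, hσ] using hz

end DecayRate

section SymmetricSeminorm

variable {ι : Type*}

def signedPerm (π : Equiv.Perm ι) (ε : ι → ℤ) : (ι → ℤ) →+ (ι → ℤ) where
  toFun x i := ε i * x (π i)
  map_zero' := by ext; simp
  map_add' x y := by ext; simp [mul_add]

@[simp]
theorem signedPerm_apply (π : Equiv.Perm ι) (ε : ι → ℤ) (x : ι → ℤ) (i : ι) :
    signedPerm π ε x i = ε i * x (π i) := rfl

structure IsSymmetricSeminorm (ν : (ι → ℤ) → ℝ) : Prop where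
  add_le : ∀ x y, ν (x + y) ≤ ν x + ν y
  nsmul_eq : ∀ (k : ℕ) x, ν (k • x) = k * ν x
  signedPerm_eq : ∀ (π : Equiv.Perm ι) (ε : ι → ℤ), (∀ i, ε i = 1 ∨ ε i = -1) →
    ∀ x, ν (signedPerm π ε x) = ν x

theorem IsSymmetricSeminorm.of_hasDecayRate {f ν : (ι → ℤ) → ℝ} {a : ℝ} (ha : 0 < a)
    (hpos : ∀ u, 0 < f u) (hf : ∀ u v, a * (f u * f v) ≤ f (u + v))
    (hsymm : ∀ (π : Equiv.Perm ι) (ε : ι → ℤ), (∀ i, ε i = 1 ∨ ε i = -1) →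
      ∀ x, f (signedPerm π ε x) = f x)
    (hν : ∀ z, HasDecayRate f z (ν z)) : IsSymmetricSeminorm ν where
  add_le x y := (hν x).le_add ha hpos hf (hν y) (hν (x + y))
  nsmul_eq k x := (hν (k • x)).unique ((hν x).nsmul k)
  signedPerm_eq π ε hε x :=
    (hν (signedPerm π ε x)).unique (HasDecayRate.map (signedPerm π ε) (hsymm π ε hε) (hν x))

namespace IsSymmetricSeminorm

variable {ν : (ι → ℤ) → ℝ} (hν : IsSymmetricSeminorm ν)
include hν

theorem map_zero : ν 0 = 0 := by
  simpa using hν.nsmul_eq 0 0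

theorem map_neg (x : ι → ℤ) : ν (-x) = ν x := by
  have h := hν.signedPerm_eq (Equiv.refl ι) (fun _ => -1) (fun _ => Or.inr rfl) x
  rwa [show signedPerm (Equiv.refl ι) (fun _ => -1) x = -x by ext; simp] at h

theorem nonneg (x : ι → ℤ) : 0 ≤ ν x := by
  have h := hν.add_le x (-x)
  rw [add_neg_cancel, hν.map_zero, hν.map_neg] at h
  linarith

theorem zsmul_eq (k : ℤ) (x : ι → ℤ) : ν (k • x) = |(k : ℝ)| * ν x := by
  rw [← Int.cast_abs, ← Nat.cast_natAbs, ← hν.nsmul_eq]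
  rcases Int.natAbs_eq k with hk | hk <;> nth_rw 1 [hk]
  · rw [natCast_zsmul]
  · rw [neg_smul, hν.map_neg, natCast_zsmul]

variable [DecidableEq ι]

theorem single_one_eq (i j : ι) : ν (Pi.single j 1) = ν (Pi.single i 1) := by
  rw [← hν.signedPerm_eq (Equiv.swap i j) (fun _ => 1) (fun _ => Or.inl rfl)]
  congr 1
  ext l
  simp [Pi.single_apply, Equiv.swap_apply_eq_iff]

theorem single_eq (i j : ι) (k : ℤ) : ν (Pi.single j k) = |(k : ℝ)| * ν (Pi.single i 1) := by
  rw [← hν.single_one_eq i j, ← hν.zsmul_eq, ← Pi.single_smul', smul_eq_mul, mul_one]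

theorem le_sum_abs_mul [Fintype ι] (x : ι → ℤ) (i : ι) :
    ν x ≤ (∑ j, |(x j : ℝ)|) * ν (Pi.single i 1) := by
  calc ν x = ν (∑ j, Pi.single j (x j)) := by rw [Finset.univ_sum_single]
    _ ≤ ∑ j, ν (Pi.single j (x j)) :=
      Finset.le_sum_of_subadditive ν hν.map_zero.le hν.add_le _ _
    _ = (∑ j, |(x j : ℝ)|) * ν (Pi.single i 1) := by
      rw [Finset.sum_mul]
      exact Finset.sum_congr rfl fun j _ => hν.single_eq i j (x j)

theorem abs_mul_le (y : ι → ℤ) (i j : ι) : |(y j : ℝ)| * ν (Pi.single i 1) ≤ ν y := by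
  let ε : ι → ℤ := fun l => if l = j then 1 else -1
  have hε : ∀ l, ε l = 1 ∨ ε l = -1 := fun l => by by_cases h : l = j <;> simp [ε, h]
  have hsum : y + signedPerm (Equiv.refl ι) ε y = Pi.single j (2 * y j) := by
    ext l
    by_cases h : l = j
    · subst h
      simp only [Pi.add_apply, signedPerm_apply, Equiv.refl_apply, Pi.single_eq_same, ε, if_pos]
      ring
    · simp [ε, h]
  have h := hν.add_le y (signedPerm (Equiv.refl ι) ε y)
  rw [hsum, hν.single_eq i, hν.signedPerm_eq _ _ hε] at h
  push_cast at h
  rw [abs_mul, abs_two] at h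
  linarith

end IsSymmetricSeminorm

end SymmetricSeminorm

section EuclideanNorm

variable {d : ℕ}

theorem enorm2_pos {x : Fin d → ℤ} (hx : x ≠ 0) : 0 < enorm2 x := by
  obtain ⟨j, hj⟩ := Function.ne_iff.mp hx
  refine Real.sqrt_pos.mpr (Finset.sum_pos' (fun i _ => sq_nonneg _) ⟨j, Finset.mem_univ j, ?_⟩)
  have : (x j : ℝ) ≠ 0 := by exact_mod_cast hj
  positivity

theorem sum_abs_le_sqrt_mul_enorm2 (x : Fin d → ℤ) :
    ∑ i, |(x i : ℝ)| ≤ Real.sqrt d * enorm2 x := by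
  rw [enorm2, ← Real.sqrt_mul d.cast_nonneg]
  refine Real.le_sqrt_of_sq_le (sq_sum_le_card_mul_sum_sq.trans_eq ?_)
  simp

theorem enorm2_le_sqrt_mul_abs {y : Fin d → ℤ} {j : Fin d} (hj : ∀ i, |y i| ≤ |y j|) :
    enorm2 y ≤ Real.sqrt d * |(y j : ℝ)| := by
  rw [enorm2, ← Real.sqrt_sq (abs_nonneg _), ← Real.sqrt_mul d.cast_nonneg]
  refine Real.sqrt_le_sqrt ((Finset.sum_le_sum fun i _ => ?_).trans_eq
    (by simp : ∑ _i : Fin d, |(y j : ℝ)| ^ 2 = _))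
  rw [← sq_abs]
  exact pow_le_pow_left₀ (abs_nonneg _) (by exact_mod_cast hj i) 2

end EuclideanNorm

namespace IsSymmetricSeminorm

variable {d : ℕ} {ν : (Fin d → ℤ) → ℝ} (hν : IsSymmetricSeminorm ν)
include hν

theorem div_enorm2_le {x : Fin d → ℤ} (hx : x ≠ 0) (i : Fin d) :
    ν x / enorm2 x ≤ Real.sqrt d * ν (Pi.single i 1) := by
  have hc := hν.nonneg (Pi.single i 1)
  rw [div_le_iff₀ (enorm2_pos hx)]
  calc ν x ≤ (∑ j, |(x j : ℝ)|) * ν (Pi.single i 1) := hν.le_sum_abs_mul x i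
    _ ≤ (Real.sqrt d * enorm2 x) * ν (Pi.single i 1) := by
      gcongr
      exact sum_abs_le_sqrt_mul_enorm2 x
    _ = Real.sqrt d * ν (Pi.single i 1) * enorm2 x := by ring

theorem sqrt_mul_le_mul_div_enorm2 {y : Fin d → ℤ} (hy : y ≠ 0) (i : Fin d) :
    Real.sqrt d * ν (Pi.single i 1) ≤ d * (ν y / enorm2 y) := by
  have hc := hν.nonneg (Pi.single i 1)
  obtain ⟨j, -, hj⟩ := Finset.exists_max_image Finset.univ (fun l => |y l|) ⟨i, Finset.mem_univ i⟩
  rw [← mul_div_assoc, le_div_iff₀ (enorm2_pos hy)]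
  calc Real.sqrt d * ν (Pi.single i 1) * enorm2 y
      ≤ Real.sqrt d * ν (Pi.single i 1) * (Real.sqrt d * |(y j : ℝ)|) := by
        gcongr
        exact enorm2_le_sqrt_mul_abs fun l => hj l (Finset.mem_univ l)
    _ = (Real.sqrt d * Real.sqrt d) * (|(y j : ℝ)| * ν (Pi.single i 1)) := by ring
    _ = d * (|(y j : ℝ)| * ν (Pi.single i 1)) := by rw [Real.mul_self_sqrt d.cast_nonneg]
    _ ≤ d * ν y := by
        gcongr
        exact hν.abs_mul_le y i j

end IsSymmetricSeminorm

theorem statement4_general {d : ℕ}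
    (G : (Fin d → ℤ) → (Fin d → ℤ) → ℝ) (a : ℝ) (ha : 0 < a)
    (hpos : ∀ x y : Fin d → ℤ, 0 < G x y)
    (htrans : ∀ x y z : Fin d → ℤ, G (x + z) (y + z) = G x y)
    (hsub : ∀ x y z : Fin d → ℤ, a * (G x z * G z y) ≤ G x y)
    (hsymm : ∀ (π : Equiv.Perm (Fin d)) (ε : Fin d → ℤ), (∀ i, ε i = 1 ∨ ε i = -1) →
      ∀ x : Fin d → ℤ, G 0 (fun i => ε i * x (π i)) = G 0 x)
    (ν : (Fin d → ℤ) → ℝ)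
    (hν : ∀ z : Fin d → ℤ, z ≠ 0 →
      Filter.Tendsto (fun n : ℕ => -(Real.log (G 0 ((n : ℤ) • z)) / (n : ℝ)))
        Filter.atTop (nhds (ν z))) :
    ∀ x y : Fin d → ℤ, x ≠ 0 → y ≠ 0 →
      ν x / enorm2 x ≤ (d : ℝ) * (ν y / enorm2 y) := by
  intro x y hx hy
  have hf : ∀ u v, a * (G 0 u * G 0 v) ≤ G 0 (u + v) := fun u v => by
    have h := htrans 0 v u
    rw [zero_add, add_comm] at h
    rw [← h]
    exact hsub 0 (u + v) u
  -- `ν` is only given off the origin; the value `0` there is the decay rate of `G 0 0`.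
  have hν₀ : ∀ z, HasDecayRate (G 0) z (Function.update ν 0 0 z) := by
    intro z
    rcases eq_or_ne z 0 with rfl | hz
    · rw [Function.update_self]
      exact hasDecayRate_zero (G 0)
    · rw [Function.update_of_ne hz]
      exact hν z hz
  have hseminorm := IsSymmetricSeminorm.of_hasDecayRate ha (hpos 0) hf hsymm hν₀
  obtain ⟨i, -⟩ := Function.ne_iff.mp hx
  rw [← Function.update_of_ne hx 0 ν, ← Function.update_of_ne hy 0 ν]
  exact (hseminorm.div_enorm2_le hx i).trans (hseminorm.sqrt_mul_le_mul_div_enorm2 hy i)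

/-- Weak equivalence of directions for the inverse correlation
length: for a translation-invariant, submultiplicative, bounded, lattice
symmetric positive two-point function, `ν_x/‖x‖₂ ≤ d · ν_y/‖y‖₂` for all
nonzero `x, y ∈ ℤ^d`. -/
theorem statement4 {d : ℕ} (hd : 1 ≤ d)
    (G : (Fin d → ℤ) → (Fin d → ℤ) → ℝ) (a : ℝ) (ha : 0 < a)
    (hpos : ∀ x y : Fin d → ℤ, 0 < G x y)
    (htrans : ∀ x y z : Fin d → ℤ, G (x + z) (y + z) = G x y)
    (hsub : ∀ x y z : Fin d → ℤ, a * (G x z * G z y) ≤ G x y)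
    (hbdd : ∃ M : ℝ, ∀ x : Fin d → ℤ, G 0 x ≤ M)
    (hsymm : ∀ (π : Equiv.Perm (Fin d)) (ε : Fin d → ℤ), (∀ i, ε i = 1 ∨ ε i = -1) →
      ∀ x : Fin d → ℤ, G 0 (fun i => ε i * x (π i)) = G 0 x)
    (ν : (Fin d → ℤ) → ℝ)
    (hν : ∀ z : Fin d → ℤ, z ≠ 0 →
      Filter.Tendsto (fun n : ℕ => -(Real.log (G 0 ((n : ℤ) • z)) / (n : ℝ)))
        Filter.atTop (nhds (ν z))) :
    ∀ x y : Fin d → ℤ, x ≠ 0 → y ≠ 0 →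
      ν x / enorm2 x ≤ (d : ℝ) * (ν y / enorm2 y) :=
  statement4_general G a ha hpos htrans hsub hsymm ν hν
end

section
/- Let Λ > 0 and δ > 0, and set I = (Λ−δ, Λ]. For each λ ∈ I let G_λ : ℤ^d × ℤ^d → (0,∞) be translation invariant with sup_{x∈ℤ^d} G_λ(0,x) < ∞, and a_λ-submultiplicative for some a_λ > 0; assume inf_{λ∈I} a_λ > 0. Assume further that for every x, y ∈ ℤ^d the map λ ↦ G_λ(x,y) is non-decreasing on I and left-continuous at Λ. Then for every x ∈ ℤ^d \ {0}, the map λ ↦ ν_x(λ) := −lim_{n→∞} (1/n)·log G_λ(0, n·x) (the limit exists for each λ ∈ I) is left-continuous at Λ: lim_{λ↑Λ} ν_x(λ) = ν_x(Λ). -/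
open Filter Topology

/-- Left-continuity of the inverse correlation length at `Λ` for a
monotone, left-continuous family of translation-invariant, uniformly
submultiplicative, bounded positive two-point functions on `I = (Λ-δ, Λ]`. -/
theorem statement5 {d : ℕ} (hd : 1 ≤ d)
    (Λ δ : ℝ) (hΛ : 0 < Λ) (hδ : 0 < δ)
    (G : ℝ → (Fin d → ℤ) → (Fin d → ℤ) → ℝ)
    (hpos : ∀ lam ∈ Set.Ioc (Λ - δ) Λ, ∀ x y : Fin d → ℤ, 0 < G lam x y)
    (htrans : ∀ lam ∈ Set.Ioc (Λ - δ) Λ, ∀ x y z : Fin d → ℤ,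
      G lam (x + z) (y + z) = G lam x y)
    (hbdd : ∀ lam ∈ Set.Ioc (Λ - δ) Λ, ∃ M : ℝ, ∀ x : Fin d → ℤ, G lam 0 x ≤ M)
    (a : ℝ → ℝ) (a₀ : ℝ) (ha₀ : 0 < a₀)
    (ha : ∀ lam ∈ Set.Ioc (Λ - δ) Λ, a₀ ≤ a lam)
    (hsub : ∀ lam ∈ Set.Ioc (Λ - δ) Λ, ∀ x y z : Fin d → ℤ,
      a lam * (G lam x z * G lam z y) ≤ G lam x y)
    (hmono : ∀ lam ∈ Set.Ioc (Λ - δ) Λ, ∀ mu ∈ Set.Ioc (Λ - δ) Λ, lam ≤ mu →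
      ∀ x y : Fin d → ℤ, G lam x y ≤ G mu x y)
    (hcont : ∀ x y : Fin d → ℤ,
      Filter.Tendsto (fun lam => G lam x y) (nhdsWithin Λ (Set.Ioo (Λ - δ) Λ))
        (nhds (G Λ x y)))
    (ν : ℝ → (Fin d → ℤ) → ℝ)
    (hν : ∀ lam ∈ Set.Ioc (Λ - δ) Λ, ∀ x : Fin d → ℤ, x ≠ 0 →
      Filter.Tendsto (fun n : ℕ => -(Real.log (G lam 0 ((n : ℤ) • x)) / (n : ℝ)))
        Filter.atTop (nhds (ν lam x)))
    (x : Fin d → ℤ) (hx : x ≠ 0) :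
    Filter.Tendsto (fun lam => ν lam x) (nhdsWithin Λ (Set.Ioo (Λ - δ) Λ))
      (nhds (ν Λ x)) := by
  set b : ℝ := min a₀ 1 with hbdef
  have hb0 : 0 < b := lt_min ha₀ one_pos
  have hb1 : b ≤ 1 := min_le_right _ _
  have hΛmem : Λ ∈ Set.Ioc (Λ - δ) Λ := ⟨by linarith, le_refl _⟩
  -- key multiplicative bound
  have key : ∀ lam ∈ Set.Ioc (Λ - δ) Λ, ∀ y : Fin d → ℤ, ∀ k : ℕ,
      (b * G lam 0 y) ^ (k + 1) ≤ G lam 0 (((k : ℤ) + 1) • y) := by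
    intro lam hlam y k
    induction k with
    | zero =>
      have hg := hpos lam hlam 0 y
      simpa using mul_le_of_le_one_left (le_of_lt hg) hb1
    | succ k ih =>
      have hg := hpos lam hlam 0 y
      have hgk := hpos lam hlam 0 (((k : ℤ) + 1) • y)
      have hba : b ≤ a lam := le_trans (min_le_left _ _) (ha lam hlam)
      have h1 := hsub lam hlam 0 (((k : ℤ) + 1 + 1) • y) y
      have h2 : G lam y (((k : ℤ) + 1 + 1) • y) = G lam 0 (((k : ℤ) + 1) • y) := by
        have ht := htrans lam hlam 0 (((k : ℤ) + 1) • y) y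
        have heq : ((k : ℤ) + 1) • y + y = ((k : ℤ) + 1 + 1) • y := by
          rw [add_smul ((k : ℤ) + 1) 1 y, one_smul]
        rw [zero_add, heq] at ht
        exact ht
      rw [h2] at h1
      have hstep : b * G lam 0 y * G lam 0 (((k : ℤ) + 1) • y)
          ≤ G lam 0 (((k : ℤ) + 1 + 1) • y) := by
        calc b * G lam 0 y * G lam 0 (((k : ℤ) + 1) • y)
            ≤ a lam * (G lam 0 y * G lam 0 (((k : ℤ) + 1) • y)) := by
              rw [mul_assoc]
              exact mul_le_mul_of_nonneg_right hba (mul_nonneg hg.le hgk.le)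
          _ ≤ G lam 0 (((k : ℤ) + 1 + 1) • y) := h1
      have hcast : ((k + 1 : ℕ) : ℤ) + 1 = (k : ℤ) + 1 + 1 := by push_cast; ring
      rw [hcast]
      calc (b * G lam 0 y) ^ (k + 1 + 1)
          = (b * G lam 0 y) * (b * G lam 0 y) ^ (k + 1) := by ring
        _ ≤ (b * G lam 0 y) * G lam 0 (((k : ℤ) + 1) • y) :=
            mul_le_mul_of_nonneg_left ih (mul_nonneg hb0.le hg.le)
        _ ≤ G lam 0 (((k : ℤ) + 1 + 1) • y) := hstep
  -- upper bound on ν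
  have nu_le : ∀ lam ∈ Set.Ioc (Λ - δ) Λ, ∀ n : ℕ, 1 ≤ n →
      ν lam x ≤ (-(Real.log b) - Real.log (G lam 0 ((n : ℤ) • x))) / n := by
    intro lam hlam n hn
    have hGn : 0 < G lam 0 ((n : ℤ) • x) := hpos lam hlam _ _
    have hsek : Tendsto (fun k : ℕ => (k + 1) * n) atTop atTop :=
      tendsto_atTop_mono
        (fun k => le_trans (Nat.le_succ k) (Nat.le_mul_of_pos_right _ hn)) tendsto_id
    have hlim : Tendsto
        (fun k : ℕ => -(Real.log (G lam 0 (((((k + 1) * n : ℕ)) : ℤ) • x))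
          / (((k + 1) * n : ℕ) : ℝ))) atTop (nhds (ν lam x)) :=
      (hν lam hlam x hx).comp hsek
    refine le_of_tendsto hlim (Filter.Eventually.of_forall fun k => ?_)
    have hsmul : ((((k + 1) * n : ℕ)) : ℤ) • x = ((k : ℤ) + 1) • ((n : ℤ) • x) := by
      rw [smul_smul]; congr 1 <;> (push_cast; ring)
    rw [hsmul]
    have hGK : 0 < G lam 0 (((k : ℤ) + 1) • ((n : ℤ) • x)) := hpos lam hlam _ _
    have hk := key lam hlam ((n : ℤ) • x) k
    have hpow : 0 < (b * G lam 0 ((n : ℤ) • x)) ^ (k + 1) :=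
      pow_pos (mul_pos hb0 hGn) _
    have hlog : ((k : ℝ) + 1) * (Real.log b + Real.log (G lam 0 ((n : ℤ) • x)))
        ≤ Real.log (G lam 0 (((k : ℤ) + 1) • ((n : ℤ) • x))) := by
      have := Real.log_le_log hpow hk
      rwa [Real.log_pow, Real.log_mul hb0.ne' hGn.ne', Nat.cast_add,
        Nat.cast_one] at this
    have hnpos : (0 : ℝ) < (n : ℝ) := by exact_mod_cast hn
    have hNeq : (((k + 1) * n : ℕ) : ℝ) = ((k : ℝ) + 1) * (n : ℝ) := by
      push_cast; ring
    rw [hNeq]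
    have h1 : (Real.log b + Real.log (G lam 0 ((n : ℤ) • x))) / (n : ℝ)
        = ((k : ℝ) + 1) * (Real.log b + Real.log (G lam 0 ((n : ℤ) • x)))
          / (((k : ℝ) + 1) * (n : ℝ)) := by
      rw [mul_div_mul_left]
      positivity
    calc -(Real.log (G lam 0 (((k : ℤ) + 1) • ((n : ℤ) • x)))
          / (((k : ℝ) + 1) * (n : ℝ)))
        ≤ -(((k : ℝ) + 1) * (Real.log b + Real.log (G lam 0 ((n : ℤ) • x)))
            / (((k : ℝ) + 1) * (n : ℝ))) :=
          by have hc : (0:ℝ) < ((k : ℝ) + 1) * (n : ℝ) := by positivity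
             gcongr
      _ = (-(Real.log b) - Real.log (G lam 0 ((n : ℤ) • x))) / (n : ℝ) := by
          rw [← h1]; ring
  -- monotonicity of ν
  have nu_mono : ∀ lam ∈ Set.Ioc (Λ - δ) Λ, ν Λ x ≤ ν lam x := by
    intro lam hlam
    refine le_of_tendsto_of_tendsto' (hν Λ hΛmem x hx) (hν lam hlam x hx) fun n => ?_
    rcases Nat.eq_zero_or_pos n with h0 | hn
    · simp [h0]
    · have hnpos : (0 : ℝ) < (n : ℝ) := by exact_mod_cast hn
      have hGl : 0 < G lam 0 ((n : ℤ) • x) := hpos lam hlam _ _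
      have hle : G lam 0 ((n : ℤ) • x) ≤ G Λ 0 ((n : ℤ) • x) :=
        hmono lam hlam Λ hΛmem hlam.2 _ _
      have hll := Real.log_le_log hGl hle
      have hdd : Real.log (G lam 0 ((n : ℤ) • x)) / (n : ℝ)
          ≤ Real.log (G Λ 0 ((n : ℤ) • x)) / (n : ℝ) := by
        gcongr
      linarith
  -- final argument
  rw [tendsto_order]
  constructor
  · intro c hc
    filter_upwards [self_mem_nhdsWithin] with lam hlam
    have hmem : lam ∈ Set.Ioc (Λ - δ) Λ := ⟨hlam.1, hlam.2.le⟩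
    exact lt_of_lt_of_le hc (nu_mono lam hmem)
  · intro c hc
    have htend : Tendsto (fun n : ℕ => -(Real.log (G Λ 0 ((n : ℤ) • x)) / (n : ℝ))
        + (-(Real.log b)) / (n : ℝ)) atTop (nhds (ν Λ x + 0)) :=
      (hν Λ hΛmem x hx).add (tendsto_const_div_atTop_nhds_zero_nat _)
    rw [add_zero] at htend
    have hmid : ν Λ x < (ν Λ x + c) / 2 := by linarith
    have hmid2 : (ν Λ x + c) / 2 < c := by linarith
    obtain ⟨n, hn1, hn2⟩ := ((htend.eventually (eventually_lt_nhds hmid)).and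
      (eventually_ge_atTop 1)).exists
    have hnpos : (0 : ℝ) < (n : ℝ) := by exact_mod_cast hn2
    have hGΛ : 0 < G Λ 0 ((n : ℤ) • x) := hpos Λ hΛmem _ _
    -- the bound at Λ is below (νΛ+c)/2
    have hboundΛ : (-(Real.log b) - Real.log (G Λ 0 ((n : ℤ) • x))) / n
        < (ν Λ x + c) / 2 := by
      have : -(Real.log (G Λ 0 ((n : ℤ) • x)) / (n : ℝ))
          + (-(Real.log b)) / (n : ℝ)
          = (-(Real.log b) - Real.log (G Λ 0 ((n : ℤ) • x))) / n := by ring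
      linarith [hn1, this ▸ hn1]
    -- continuity in lam
    have hcl : Tendsto (fun lam => (-(Real.log b)
          - Real.log (G lam 0 ((n : ℤ) • x))) / (n : ℝ))
        (nhdsWithin Λ (Set.Ioo (Λ - δ) Λ))
        (nhds ((-(Real.log b) - Real.log (G Λ 0 ((n : ℤ) • x))) / (n : ℝ))) := by
      have hlog : Tendsto (fun lam => Real.log (G lam 0 ((n : ℤ) • x)))
          (nhdsWithin Λ (Set.Ioo (Λ - δ) Λ))
          (nhds (Real.log (G Λ 0 ((n : ℤ) • x)))) :=
        ((Real.continuousAt_log hGΛ.ne').tendsto).comp (hcont 0 ((n : ℤ) • x))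
      exact (tendsto_const_nhds.sub hlog).div_const _
    have hev := hcl.eventually (eventually_lt_nhds hboundΛ)
    filter_upwards [hev, self_mem_nhdsWithin] with lam hlt hlam
    have hmem : lam ∈ Set.Ioc (Λ - δ) Λ := ⟨hlam.1, hlam.2.le⟩
    exact lt_trans (lt_of_le_of_lt (nu_le lam hmem n hn2) hlt) hmid2
end

section
/- Let x ∈ ℤ^d \ {0} and let t ∈ ℝ^d be dual to x. Suppose Ξ := Σ_{y∈ℤ^d\{0}} ψ(y)·e^{−𝔰_t(y)} < ∞, and set λ̃ = min(Ξ^{−1}, 1). Then for every λ ∈ (0, λ̃), the limit ν_x(λ) = −lim_{n→∞} (1/n)·log G^KRW_λ(0, n·x) exists and equals |x| (saturation of the inverse correlation length). -/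
/-!
Tilt by the dual vector: `J_y = e^{-t·y} ψ(y) e^{-𝔰_t(y)}`. Since `y ↦ t·y` is additive, every
walk from `0` to `n x` carries the same factor `e^{-t·nx} = e^{-n|x|}`, and what is left, summed
over all step sequences, is the geometric series `Σ_k (λΞ)^k = (1 - λΞ)⁻¹`. Hence
`λ ψ(nx) e^{-n|x|} ≤ G_λ(0, nx) ≤ e^{-n|x|} / (1 - λΞ)`, the lower bound coming from the walk with
a single step; as `ψ` is sub-exponential, both bounds decay at the exponential rate `|x|`.
-/

open Filter Topology

noncomputable section

/-- `nrm` is a norm on `ℝ^d` invariant under the symmetries of `ℤ^d`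
(coordinate permutations and sign flips). -/
structure IsLatticeNorm (d : ℕ) (nrm : (Fin d → ℝ) → ℝ) : Prop where
  eq_zero : ∀ x : Fin d → ℝ, nrm x = 0 ↔ x = 0
  smul : ∀ (a : ℝ) (x : Fin d → ℝ), nrm (a • x) = |a| * nrm x
  add_le : ∀ x y : Fin d → ℝ, nrm (x + y) ≤ nrm x + nrm y
  symm : ∀ (π : Equiv.Perm (Fin d)) (ε : Fin d → ℝ), (∀ i, ε i = 1 ∨ ε i = -1) →
      ∀ x : Fin d → ℝ, nrm (fun i => ε i * x (π i)) = nrm x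

/-- `ψ` is a positive, lattice-symmetric, sub-exponential prefactor on `ℤ^d \ {0}`. -/
structure IsPrefactor (d : ℕ) (nrm : (Fin d → ℝ) → ℝ) (ψ : (Fin d → ℤ) → ℝ) : Prop where
  pos : ∀ y : Fin d → ℤ, y ≠ 0 → 0 < ψ y
  symm : ∀ (π : Equiv.Perm (Fin d)) (ε : Fin d → ℤ), (∀ i, ε i = 1 ∨ ε i = -1) →
      ∀ y : Fin d → ℤ, ψ (fun i => ε i * y (π i)) = ψ y
  subexp : Filter.Tendsto (fun y : Fin d → ℤ => Real.log (ψ y) / nrm (ic y))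
      Filter.cofinite (nhds 0)

/-- The coupling constants `J_y = ψ(y) e^{-|y|}` for `y ≠ 0`, and `J_0 = 0`. -/
def Jw {d : ℕ} (nrm : (Fin d → ℝ) → ℝ) (ψ : (Fin d → ℤ) → ℝ) (y : Fin d → ℤ) : ℝ :=
  if y = 0 then 0 else ψ y * Real.exp (-(nrm (ic y)))

/-- The killed random walk two-point function
`G^KRW_λ(x,y) = Σ_{k≥0} Σ_{y_1,…,y_k ≠ 0 : y_1+⋯+y_k = y-x} Π_i λ J_{y_i}`,
with values in `[0,∞]`; walks are encoded by their lists of nonzero steps. -/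
def KRW {d : ℕ} (lam : ℝ) (J : (Fin d → ℤ) → ℝ) (x y : Fin d → ℤ) : ENNReal :=
  ∑' l : {l : List (Fin d → ℤ) // (∀ s ∈ l, s ≠ 0) ∧ l.sum = y - x},
    (l.1.map (fun s => ENNReal.ofReal (lam * J s))).prod

/-- `icl lam J x ν` expresses that the inverse correlation length
`-lim_n (1/n) log G^KRW_λ(0, n•x)` exists and equals `ν`. -/
def icl {d : ℕ} (lam : ℝ) (J : (Fin d → ℤ) → ℝ) (x : Fin d → ℤ) (ν : ℝ) : Prop :=
  Filter.Tendsto (fun n : ℕ => -(Real.log ((KRW lam J 0 ((n : ℤ) • x)).toReal) / (n : ℝ)))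
    Filter.atTop (nhds ν)

/-- Euclidean scalar product on `ℝ^d`. -/
def dotR {d : ℕ} (t y : Fin d → ℝ) : ℝ := ∑ i, t i * y i

/-- `t` is dual to `x`: `t·x = |x|` and `t·y ≤ |y|` for all `y`. -/
def IsDual {d : ℕ} (nrm : (Fin d → ℝ) → ℝ) (t x : Fin d → ℝ) : Prop :=
  dotR t x = nrm x ∧ ∀ y : Fin d → ℝ, dotR t y ≤ nrm y

/-- The surcharge function `𝔰_t(y) = |y| - t·y` of a dual vector `t`. -/
def scharge {d : ℕ} (nrm : (Fin d → ℝ) → ℝ) (t : Fin d → ℝ) (y : Fin d → ℤ) : ℝ :=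
  nrm (ic y) - dotR t (ic y)

end

open scoped ENNReal

theorem ENNReal.tsum_fin_pi_prod {β : Type*} (g : β → ℝ≥0∞) (n : ℕ) :
    ∑' u : Fin n → β, ∏ i, g (u i) = (∑' b, g b) ^ n := by
  induction n with
  | zero => simp [tsum_fintype]
  | succ n ih =>
    calc ∑' u : Fin (n + 1) → β, ∏ i, g (u i)
        = ∑' p : β × (Fin n → β), ∏ i, g (Fin.consEquiv (fun _ => β) p i) :=
          ((Fin.consEquiv fun _ => β).tsum_eq _).symm
      _ = ∑' p : β × (Fin n → β), g p.1 * ∏ i, g (p.2 i) := by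
          simp [Fin.prod_univ_succ, Fin.consEquiv]
      _ = (∑' b, g b) ^ (n + 1) := by
          rw [ENNReal.tsum_prod (f := fun a (u : Fin n → β) => g a * ∏ i, g (u i)), pow_succ',
            ← ih, ← ENNReal.tsum_mul_right]
          simp_rw [ENNReal.tsum_mul_left]

/-- Geometric series over words: splitting a list by its length gives `∑ₙ (∑ g)ⁿ`. -/
theorem ENNReal.tsum_list_prod_map {β : Type*} (g : β → ℝ≥0∞) :
    ∑' L : List β, (L.map g).prod = (1 - ∑' b, g b)⁻¹ := by
  rw [← ENNReal.tsum_geometric, ← List.equivSigmaTuple.symm.tsum_eq, ENNReal.tsum_sigma']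
  refine tsum_congr fun n => ?_
  rw [← ENNReal.tsum_fin_pi_prod]
  refine tsum_congr fun u => ?_
  change ((List.ofFn u).map g).prod = _
  rw [List.map_ofFn, List.prod_ofFn]
  rfl

theorem prod_map_ofReal_exp_neg_mul {M : Type*} [AddMonoid M] (φ : M →+ ℝ) (w : M → ℝ)
    (l : List M) :
    (l.map fun s => ENNReal.ofReal (Real.exp (-φ s) * w s)).prod
      = ENNReal.ofReal (Real.exp (-φ l.sum)) * (l.map fun s => ENNReal.ofReal (w s)).prod := by
  induction l with
  | nil => simp
  | cons a l ih =>
    rw [List.map_cons, List.prod_cons, ih]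
    simp only [List.map_cons, List.prod_cons, List.sum_cons, map_add, neg_add, Real.exp_add,
      ENNReal.ofReal_mul (Real.exp_pos _).le]
    ring

section KRW

variable {d : ℕ} (lam : ℝ) (J : (Fin d → ℤ) → ℝ)

theorem KRW_le_of_tilt (φ : (Fin d → ℤ) →+ ℝ) (w : (Fin d → ℤ) → ℝ)
    (hw : ∀ s, lam * J s = Real.exp (-φ s) * w s) (x y : Fin d → ℤ) :
    KRW lam J x y
      ≤ ENNReal.ofReal (Real.exp (-φ (y - x))) * (1 - ∑' s, ENNReal.ofReal (w s))⁻¹ := by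
  calc KRW lam J x y
      = ∑' l : {l : List (Fin d → ℤ) // (∀ s ∈ l, s ≠ 0) ∧ l.sum = y - x},
          ENNReal.ofReal (Real.exp (-φ (y - x))) *
            (l.1.map fun s => ENNReal.ofReal (w s)).prod := by
        refine tsum_congr fun l => ?_
        simp_rw [hw, prod_map_ofReal_exp_neg_mul, l.2.2]
    _ = ENNReal.ofReal (Real.exp (-φ (y - x))) *
          ∑' l : {l : List (Fin d → ℤ) // (∀ s ∈ l, s ≠ 0) ∧ l.sum = y - x},
            (l.1.map fun s => ENNReal.ofReal (w s)).prod := ENNReal.tsum_mul_left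
    _ ≤ _ := by
        gcongr
        exact (ENNReal.tsum_comp_le_tsum_of_injective Subtype.val_injective _).trans_eq
          (ENNReal.tsum_list_prod_map _)

theorem ofReal_step_le_KRW {x y : Fin d → ℤ} (hxy : x ≠ y) :
    ENNReal.ofReal (lam * J (y - x)) ≤ KRW lam J x y := by
  have hstep : y - x ≠ 0 := sub_ne_zero.mpr hxy.symm
  unfold KRW
  simpa using ENNReal.le_tsum
    (f := fun l : {l : List (Fin d → ℤ) // (∀ s ∈ l, s ≠ 0) ∧ l.sum = y - x} =>
      (l.1.map fun s => ENNReal.ofReal (lam * J s)).prod)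
    ⟨[y - x], by simpa using hstep, by simp⟩

end KRW

theorem ic_zsmul {d : ℕ} (n : ℤ) (x : Fin d → ℤ) : ic (n • x) = (n : ℝ) • ic x := by
  funext i
  simp [ic]

def dotRIntHom {d : ℕ} (t : Fin d → ℝ) : (Fin d → ℤ) →+ ℝ where
  toFun y := dotR t (ic y)
  map_zero' := by simp [dotR, ic]
  map_add' a b := by simp [dotR, ic, mul_add, Finset.sum_add_distrib]

theorem dotRIntHom_apply {d : ℕ} (t : Fin d → ℝ) (y : Fin d → ℤ) :
    dotRIntHom t y = dotR t (ic y) := rfl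

namespace IsLatticeNorm

variable {d : ℕ} {nrm : (Fin d → ℝ) → ℝ}

theorem nrm_ic_ne_zero (hnrm : IsLatticeNorm d nrm) {x : Fin d → ℤ} (hx : x ≠ 0) :
    nrm (ic x) ≠ 0 := by
  rw [Ne, hnrm.eq_zero]
  intro h
  exact hx (funext fun i => by simpa [ic] using congrFun h i)

theorem nrm_ic_nsmul (hnrm : IsLatticeNorm d nrm) (n : ℕ) (x : Fin d → ℤ) :
    nrm (ic ((n : ℤ) • x)) = n * nrm (ic x) := by
  rw [ic_zsmul, hnrm.smul]
  simp

theorem le_toReal_KRW_nsmul (hnrm : IsLatticeNorm d nrm) {ψ : (Fin d → ℤ) → ℝ}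
    {x : Fin d → ℤ} (hx : x ≠ 0) {lam : ℝ} {n : ℕ} (hn : n ≠ 0)
    (hfin : KRW lam (Jw nrm ψ) 0 ((n : ℤ) • x) ≠ ⊤) :
    lam * ψ ((n : ℤ) • x) * Real.exp (-(n * nrm (ic x)))
      ≤ (KRW lam (Jw nrm ψ) 0 ((n : ℤ) • x)).toReal := by
  have hnx : (n : ℤ) • x ≠ 0 := smul_ne_zero (by exact_mod_cast hn) hx
  have hstep := ofReal_step_le_KRW lam (Jw nrm ψ) hnx.symm
  rw [sub_zero, Jw, if_neg hnx, hnrm.nrm_ic_nsmul, ← mul_assoc] at hstep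
  exact (ENNReal.ofReal_le_iff_le_toReal hfin).mp hstep

end IsLatticeNorm

namespace IsPrefactor

variable {d : ℕ} {nrm : (Fin d → ℝ) → ℝ} {ψ : (Fin d → ℤ) → ℝ}

theorem Jw_nonneg (hψ : IsPrefactor d nrm ψ) (y : Fin d → ℤ) : 0 ≤ Jw nrm ψ y := by
  unfold Jw
  split_ifs with hy
  · exact le_rfl
  · exact mul_nonneg (hψ.pos y hy).le (Real.exp_pos _).le

theorem tendsto_log_mul_nsmul_div (hψ : IsPrefactor d nrm ψ) (hnrm : IsLatticeNorm d nrm)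
    {c : ℝ} (hc : 0 < c) {x : Fin d → ℤ} (hx : x ≠ 0) :
    Tendsto (fun n : ℕ => Real.log (c * ψ ((n : ℤ) • x)) / n) atTop (𝓝 0) := by
  have hinj : Function.Injective fun n : ℕ => (n : ℤ) • x :=
    (smul_left_injective ℤ hx).comp Nat.cast_injective
  have hcof : Tendsto (fun n : ℕ => (n : ℤ) • x) atTop cofinite := by
    rw [← Nat.cofinite_eq_atTop]
    exact hinj.tendsto_cofinite
  have hN := hnrm.nrm_ic_ne_zero hx
  have h := (tendsto_const_div_atTop_nhds_zero_nat (Real.log c)).add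
    ((hψ.subexp.comp hcof).mul_const (nrm (ic x)))
  rw [zero_mul, add_zero] at h
  refine h.congr' ((eventually_ne_atTop 0).mono fun n hn => ?_)
  have hnx : (n : ℤ) • x ≠ 0 := smul_ne_zero (by exact_mod_cast hn) hx
  simp only [Function.comp_apply, hnrm.nrm_ic_nsmul]
  rw [Real.log_mul hc.ne' (hψ.pos _ hnx).ne']
  field_simp

/-- The tilted weights `J_s e^{t·s}` equal `ψ(s) e^{-𝔰_t(s)}` off the origin. -/
theorem hasSum_Jw_mul_exp_dot {t : Fin d → ℝ} {Xi : ℝ}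
    (hXi : HasSum (fun y : {y : Fin d → ℤ // y ≠ 0} =>
      ψ y.1 * Real.exp (-(scharge nrm t y.1))) Xi) :
    HasSum (fun s => Jw nrm ψ s * Real.exp (dotRIntHom t s)) Xi := by
  have hsupp : Function.support (fun s => Jw nrm ψ s * Real.exp (dotRIntHom t s))
      ⊆ {y | y ≠ 0} := by
    intro s hs hs0
    simp [Jw, hs0] at hs
  refine (hasSum_subtype_iff_of_support_subset hsupp).mp (hXi.congr_fun fun y => ?_)
  simp only [Function.comp_apply, Jw, if_neg y.2, scharge, dotRIntHom_apply, mul_assoc,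
    ← Real.exp_add]
  ring_nf

theorem KRW_le (hψ : IsPrefactor d nrm ψ) {t : Fin d → ℝ} {Xi : ℝ}
    (hXi : HasSum (fun y : {y : Fin d → ℤ // y ≠ 0} =>
      ψ y.1 * Real.exp (-(scharge nrm t y.1))) Xi)
    {lam : ℝ} (hlam : 0 ≤ lam) (hlamXi : lam * Xi < 1) (y : Fin d → ℤ) :
    KRW lam (Jw nrm ψ) 0 y
      ≤ ENNReal.ofReal ((1 - lam * Xi)⁻¹ * Real.exp (-dotR t (ic y))) := by
  set w : (Fin d → ℤ) → ℝ := fun s => lam * (Jw nrm ψ s * Real.exp (dotRIntHom t s))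
  have hw : ∀ s, lam * Jw nrm ψ s = Real.exp (-dotRIntHom t s) * w s := fun s => by
    simp only [w, Real.exp_neg]
    field_simp
  have hw_nonneg : ∀ s, 0 ≤ w s := fun s =>
    mul_nonneg hlam (mul_nonneg (hψ.Jw_nonneg s) (Real.exp_pos _).le)
  have hw_sum : HasSum w (lam * Xi) := (hasSum_Jw_mul_exp_dot hXi).mul_left lam
  have hgeom : (1 - ∑' s, ENNReal.ofReal (w s))⁻¹ = ENNReal.ofReal (1 - lam * Xi)⁻¹ := by
    rw [← ENNReal.ofReal_tsum_of_nonneg hw_nonneg hw_sum.summable, hw_sum.tsum_eq,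
      ENNReal.ofReal_inv_of_pos (by linarith), ENNReal.ofReal_sub _ (hw_sum.nonneg hw_nonneg),
      ENNReal.ofReal_one]
  calc KRW lam (Jw nrm ψ) 0 y
      ≤ ENNReal.ofReal (Real.exp (-dotRIntHom t (y - 0))) *
          (1 - ∑' s, ENNReal.ofReal (w s))⁻¹ :=
        KRW_le_of_tilt lam _ _ w hw 0 y
    _ = _ := by
        rw [hgeom, sub_zero, dotRIntHom_apply, mul_comm,
          ENNReal.ofReal_mul (inv_pos.mpr (by linarith)).le]

theorem KRW_nsmul_le (hψ : IsPrefactor d nrm ψ)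
    {t : Fin d → ℝ} {x : Fin d → ℤ} (htx : dotR t (ic x) = nrm (ic x)) {Xi : ℝ}
    (hXi : HasSum (fun y : {y : Fin d → ℤ // y ≠ 0} =>
      ψ y.1 * Real.exp (-(scharge nrm t y.1))) Xi)
    {lam : ℝ} (hlam : 0 ≤ lam) (hlamXi : lam * Xi < 1) (n : ℕ) :
    KRW lam (Jw nrm ψ) 0 ((n : ℤ) • x)
      ≤ ENNReal.ofReal ((1 - lam * Xi)⁻¹ * Real.exp (-(n * nrm (ic x)))) := by
  have hdot : dotR t (ic ((n : ℤ) • x)) = n * nrm (ic x) := by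
    rw [← dotRIntHom_apply, map_zsmul, dotRIntHom_apply, htx, zsmul_eq_mul, Int.cast_natCast]
  simpa only [hdot] using hψ.KRW_le hXi hlam hlamXi ((n : ℤ) • x)

end IsPrefactor

theorem tendsto_log_div_of_le_of_le {a b G : ℕ → ℝ} {L : ℝ} (ha : ∀ᶠ n in atTop, 0 < a n)
    (haG : ∀ᶠ n in atTop, a n ≤ G n) (hGb : ∀ᶠ n in atTop, G n ≤ b n)
    (ha_lim : Tendsto (fun n : ℕ => Real.log (a n) / n) atTop (𝓝 L))
    (hb_lim : Tendsto (fun n : ℕ => Real.log (b n) / n) atTop (𝓝 L)) :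
    Tendsto (fun n : ℕ => Real.log (G n) / n) atTop (𝓝 L) := by
  refine tendsto_of_tendsto_of_tendsto_of_le_of_le' ha_lim hb_lim ?_ ?_
  · filter_upwards [ha, haG] with n han hn
    exact div_le_div_of_nonneg_right (Real.log_le_log han hn) n.cast_nonneg
  · filter_upwards [ha, haG, hGb] with n han hn hn'
    exact div_le_div_of_nonneg_right (Real.log_le_log (han.trans_le hn) hn') n.cast_nonneg

theorem tendsto_log_mul_exp_div {f : ℕ → ℝ} (N : ℝ) (hf : ∀ᶠ n in atTop, 0 < f n)
    (hf_lim : Tendsto (fun n : ℕ => Real.log (f n) / n) atTop (𝓝 0)) :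
    Tendsto (fun n : ℕ => Real.log (f n * Real.exp (-(n * N))) / n) atTop (𝓝 (-N)) := by
  have h := hf_lim.add_const (-N)
  rw [zero_add] at h
  refine h.congr' ?_
  filter_upwards [hf, eventually_gt_atTop 0] with n hfn hn
  rw [Real.log_mul hfn.ne' (Real.exp_pos _).ne', Real.log_exp]
  field_simp

theorem statement6_general {d : ℕ}
    (nrm : (Fin d → ℝ) → ℝ) (hnrm : IsLatticeNorm d nrm)
    (ψ : (Fin d → ℤ) → ℝ) (hψ : IsPrefactor d nrm ψ)
    (x : Fin d → ℤ) (hx : x ≠ 0)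
    (t : Fin d → ℝ) (ht : IsDual nrm t (ic x))
    (Xi : ℝ)
    (hXi : HasSum (fun y : {y : Fin d → ℤ // y ≠ 0} =>
      ψ y.1 * Real.exp (-(scharge nrm t y.1))) Xi)
    (lam : ℝ) (hlam0 : 0 < lam) (hlam1 : lam < min Xi⁻¹ 1) :
    icl lam (Jw nrm ψ) x (nrm (ic x)) := by
  obtain ⟨htx, -⟩ := ht
  have hlamXi : lam * Xi < 1 := by
    have hlam : lam < Xi⁻¹ := hlam1.trans_le (min_le_left _ _)
    exact (lt_mul_inv_iff₀ (inv_pos.mp (hlam0.trans hlam))).mp (by rwa [one_mul])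
  have hC : 0 < (1 - lam * Xi)⁻¹ := inv_pos.mpr (by linarith)
  have hupper (n : ℕ) := hψ.KRW_nsmul_le htx hXi hlam0.le hlamXi n
  have hpos : ∀ᶠ n : ℕ in atTop, 0 < lam * ψ ((n : ℤ) • x) :=
    (eventually_ne_atTop 0).mono fun n hn =>
      mul_pos hlam0 (hψ.pos _ (smul_ne_zero (by exact_mod_cast hn) hx))
  have hlog := tendsto_log_div_of_le_of_le (hpos.mono fun n hn => mul_pos hn (Real.exp_pos _))
    ((eventually_ne_atTop 0).mono fun n hn =>
      hnrm.le_toReal_KRW_nsmul hx hn (ne_top_of_le_ne_top ENNReal.ofReal_ne_top (hupper n)))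
    (Eventually.of_forall fun n =>
      ENNReal.toReal_le_of_le_ofReal (mul_pos hC (Real.exp_pos _)).le (hupper n))
    (tendsto_log_mul_exp_div _ hpos (hψ.tendsto_log_mul_nsmul_div hnrm hlam0 hx))
    (tendsto_log_mul_exp_div _ (Eventually.of_forall fun _ => hC)
      (tendsto_const_div_atTop_nhds_zero_nat _))
  unfold icl
  simpa only [neg_neg] using hlog.neg

/-- If `Ξ = Σ_{y≠0} ψ(y) e^{-𝔰_t(y)} < ∞` for a vector `t` dual to
`x`, then for every `λ ∈ (0, min(Ξ⁻¹,1))` the inverse correlation length of the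
KRW in direction `x` exists and equals `|x|` (saturation). -/
theorem statement6 {d : ℕ} (hd : 1 ≤ d)
    (nrm : (Fin d → ℝ) → ℝ) (hnrm : IsLatticeNorm d nrm)
    (ψ : (Fin d → ℤ) → ℝ) (hψ : IsPrefactor d nrm ψ)
    (hJ1 : HasSum (fun y : Fin d → ℤ => Jw nrm ψ y) 1)
    (x : Fin d → ℤ) (hx : x ≠ 0)
    (t : Fin d → ℝ) (ht : IsDual nrm t (ic x))
    (Xi : ℝ)
    (hXi : HasSum (fun y : {y : Fin d → ℤ // y ≠ 0} =>
      ψ y.1 * Real.exp (-(scharge nrm t y.1))) Xi)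
    (lam : ℝ) (hlam0 : 0 < lam) (hlam1 : lam < min Xi⁻¹ 1) :
    icl lam (Jw nrm ψ) x (nrm (ic x)) :=
  statement6_general nrm hnrm ψ hψ x hx t ht Xi hXi lam hlam0 hlam1
end

section
/- Let α > 0, let λ* > 0, and for each λ ∈ (0, λ*) let G_λ : ℤ^d × ℤ^d → [0,∞) be a function such that: (i) there exists C_λ < ∞ with G_λ(x,y) ≤ C_λ·G^KRW_{αλ}(x,y) for all x,y ∈ ℤ^d; and (ii) there exists κ_λ > 0 with G_λ(0,y) ≥ κ_λ·J_y for all y ∈ ℤ^d \ {0}. Let x ∈ ℤ^d \ {0} and let t be dual to x, and suppose Ξ := Σ_{y≠0} ψ(y)·e^{−𝔰_t(y)} < ∞. Then, setting λ̃ = α^{−1}·min(Ξ^{−1}, 1), for every λ ∈ (0, min(λ̃, λ*)) the limit −lim_{n→∞} (1/n)·log G_λ(0, n·x) exists and equals |x|. -/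
open Filter Topology

open ENNReal

section Helpers

lemma tsum_pi_fin {β : Type*} (g : β → ℝ≥0∞) : ∀ n : ℕ,
    ∑' f : Fin n → β, ∏ i, g (f i) = (∑' b, g b) ^ n := by
  intro n
  induction n with
  | zero =>
    rw [tsum_eq_single (fun i => Fin.elim0 i) ?_]
    · simp
    · intro b hb; exact absurd (funext fun i => Fin.elim0 i) hb
  | succ n ih =>
    rw [← (Fin.consEquiv (fun _ : Fin (n+1) => β)).tsum_eq, pow_succ, ← ih]
    have : ∀ c : β × (Fin n → β),
        (∏ i : Fin (n+1), g ((Fin.consEquiv fun _ => β) c i)) = g c.1 * ∏ i, g (c.2 i) := by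
      intro c
      rw [Fin.prod_univ_succ]
      simp [Fin.consEquiv]
    rw [tsum_congr this, ENNReal.tsum_prod']
    calc ∑' (a : β) (f : Fin n → β), g a * ∏ i, g (f i)
        = (∑' b, g b) * ∑' f : Fin n → β, ∏ i, g (f i) := by
          rw [← ENNReal.tsum_mul_right]
          congr 1; funext a; rw [ENNReal.tsum_mul_left]
      _ = (∑' f : Fin n → β, ∏ i, g (f i)) * ∑' b, g b := mul_comm _ _

lemma tsum_list {β : Type*} (g : β → ℝ≥0∞) :
    ∑' l : List β, (l.map g).prod = (1 - ∑' b, g b)⁻¹ := by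
  rw [← List.equivSigmaTuple.symm.tsum_eq, ← ENNReal.tsum_geometric]
  rw [ENNReal.tsum_sigma']
  congr 1; funext n
  rw [← tsum_pi_fin g n]
  congr 1; funext f
  simp [List.equivSigmaTuple, List.prod_ofFn]

lemma list_prod_ofReal {β : Type*} (f : β → ℝ) : ∀ (l : List β), (∀ s ∈ l, 0 ≤ f s) →
    (l.map (fun s => ENNReal.ofReal (f s))).prod = ENNReal.ofReal ((l.map f).prod) := by
  intro l
  induction l with
  | nil => simp
  | cons a l ih =>
    intro h
    simp only [List.map_cons, List.prod_cons]
    rw [ih (fun s hs => h s (List.mem_cons_of_mem a hs)),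
      ← ENNReal.ofReal_mul (h a List.mem_cons_self)]

end Helpers

section Helpers2

lemma ic_add {d : ℕ} (y z : Fin d → ℤ) : ic (y + z) = ic y + ic z := by
  funext i; simp [ic]

lemma ic_zero {d : ℕ} : ic (0 : Fin d → ℤ) = 0 := by funext i; simp [ic]

lemma dotR_add {d : ℕ} (t u v : Fin d → ℝ) : dotR t (u + v) = dotR t u + dotR t v := by
  simp [dotR, mul_add, Finset.sum_add_distrib]

lemma dotR_zero {d : ℕ} (t : Fin d → ℝ) : dotR t (0 : Fin d → ℝ) = 0 := by simp [dotR]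

lemma dotR_smul {d : ℕ} (t v : Fin d → ℝ) (c : ℝ) : dotR t (c • v) = c * dotR t v := by
  simp [dotR, Finset.mul_sum, mul_left_comm]

lemma tilt {d : ℕ} (nrm : (Fin d → ℝ) → ℝ) (ψ : (Fin d → ℤ) → ℝ) (t : Fin d → ℝ) (a : ℝ) :
    ∀ l : List (Fin d → ℤ), (∀ s ∈ l, s ≠ 0) →
    (l.map (fun s => a * Jw nrm ψ s)).prod
      = Real.exp (-(dotR t (ic l.sum)))
        * (l.map (fun s => a * (ψ s * Real.exp (-(scharge nrm t s))))).prod := by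
  intro l
  induction l with
  | nil => simp [ic_zero, dotR_zero]
  | cons s l ih =>
    intro h
    have hs : s ≠ 0 := h s List.mem_cons_self
    simp only [List.map_cons, List.prod_cons, List.sum_cons]
    rw [ih (fun u hu => h u (List.mem_cons_of_mem s hu)), ic_add, dotR_add, neg_add,
      Real.exp_add, Jw, if_neg hs]
    have hdec : nrm (ic s) = scharge nrm t s + dotR t (ic s) := by
      simp [scharge]
    rw [hdec, neg_add, Real.exp_add]
    ring

end Helpers2


/-- Saturation at small `λ` for a general model `G_λ` dominated by
the KRW (`G_λ ≤ C_λ G^KRW_{αλ}`) and dominating the step weights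
(`G_λ(0,y) ≥ κ_λ J_y`): if `Ξ = Σ_{y≠0} ψ(y) e^{-𝔰_t(y)} < ∞` for `t` dual to
`x`, then for every `λ ∈ (0, min(α⁻¹ min(Ξ⁻¹,1), λ*))` the inverse correlation
length of `G_λ` in direction `x` exists and equals `|x|`. -/
theorem statement8 {d : ℕ} (hd : 1 ≤ d)
    (nrm : (Fin d → ℝ) → ℝ) (hnrm : IsLatticeNorm d nrm)
    (ψ : (Fin d → ℤ) → ℝ) (hψ : IsPrefactor d nrm ψ)
    (hJ1 : HasSum (fun y : Fin d → ℤ => Jw nrm ψ y) 1)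
    (α : ℝ) (hα : 0 < α) (lamstar : ℝ) (hls0 : 0 < lamstar)
    (G : ℝ → (Fin d → ℤ) → (Fin d → ℤ) → ℝ)
    (hGnn : ∀ lam ∈ Set.Ioo (0 : ℝ) lamstar, ∀ x y : Fin d → ℤ, 0 ≤ G lam x y)
    (hdom : ∀ lam ∈ Set.Ioo (0 : ℝ) lamstar, ∃ C : ℝ, ∀ x y : Fin d → ℤ,
      ENNReal.ofReal (G lam x y) ≤ ENNReal.ofReal C * KRW (α * lam) (Jw nrm ψ) x y)
    (hlow : ∀ lam ∈ Set.Ioo (0 : ℝ) lamstar, ∃ κ : ℝ, 0 < κ ∧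
      ∀ y : Fin d → ℤ, y ≠ 0 → κ * Jw nrm ψ y ≤ G lam 0 y)
    (x : Fin d → ℤ) (hx : x ≠ 0)
    (t : Fin d → ℝ) (ht : IsDual nrm t (ic x))
    (Xi : ℝ)
    (hXi : HasSum (fun y : {y : Fin d → ℤ // y ≠ 0} =>
      ψ y.1 * Real.exp (-(scharge nrm t y.1))) Xi)
    (lam : ℝ) (hlam0 : 0 < lam) (hlam1 : lam < min (α⁻¹ * min Xi⁻¹ 1) lamstar) :
    Filter.Tendsto (fun n : ℕ => -(Real.log (G lam 0 ((n : ℤ) • x)) / (n : ℝ)))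
      Filter.atTop (nhds (nrm (ic x))) := by
  -- basic positivity facts
  have hnn : ∀ v : Fin d → ℝ, 0 ≤ nrm v := by
    intro v
    have h0 : nrm (0 : Fin d → ℝ) = 0 := (hnrm.eq_zero 0).2 rfl
    have hneg : nrm (-v) = nrm v := by
      have := hnrm.smul (-1) v
      simpa using this
    have := hnrm.add_le v (-v)
    simp only [add_neg_cancel, h0, hneg] at this
    linarith
  set cx := nrm (ic x) with hcxdef
  have hicx : ic x ≠ 0 := by
    intro h
    apply hx
    funext i
    have := congrFun h i
    simpa [ic] using this
  have hcx : 0 < cx := by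
    rcases lt_or_eq_of_le (hnn (ic x)) with h | h
    · exact h
    · exact absurd ((hnrm.eq_zero (ic x)).1 h.symm) hicx
  -- membership and constants
  have hmem : lam ∈ Set.Ioo (0 : ℝ) lamstar := ⟨hlam0, lt_of_lt_of_le hlam1 (min_le_right _ _)⟩
  obtain ⟨C, hC⟩ := hdom lam hmem
  obtain ⟨κ, hκ, hκJ⟩ := hlow lam hmem
  set a := α * lam with hadef
  have ha : 0 < a := mul_pos hα hlam0
  -- Xi positive, a * Xi < 1
  have hy0 : (fun _ : Fin d => (1 : ℤ)) ≠ 0 := by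
    intro h
    have := congrFun h ⟨0, hd⟩
    simp at this
  have hXipos : 0 < Xi := by
    have hle := le_hasSum hXi ⟨_, hy0⟩ (fun j _ => by
      have := hψ.pos j.1 j.2
      positivity)
    have : 0 < ψ (fun _ : Fin d => (1 : ℤ)) * Real.exp (-(scharge nrm t (fun _ => 1))) := by
      have := hψ.pos _ hy0
      positivity
    linarith
  have haXi : a * Xi < 1 := by
    have h1 : lam < α⁻¹ * min Xi⁻¹ 1 := lt_of_lt_of_le hlam1 (min_le_left _ _)
    have h2 : a < min Xi⁻¹ 1 := by
      have := (mul_lt_mul_iff_right₀ hα).2 h1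
      rwa [← mul_assoc, mul_inv_cancel₀ (ne_of_gt hα), one_mul] at this
    have h3 : a < Xi⁻¹ := lt_of_lt_of_le h2 (min_le_left _ _)
    calc a * Xi < Xi⁻¹ * Xi := by exact (mul_lt_mul_iff_left₀ hXipos).2 h3
      _ = 1 := inv_mul_cancel₀ (ne_of_gt hXipos)
  set M := (1 - a * Xi)⁻¹ with hMdef
  have hM : 0 < M := by
    have : 0 < 1 - a * Xi := by linarith
    positivity
  -- scaling of ic and nrm along n • x
  have hicn : ∀ n : ℕ, ic ((n : ℤ) • x) = (n : ℝ) • ic x := by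
    intro n
    funext i
    simp [ic]
  have hnrmn : ∀ n : ℕ, nrm (ic ((n : ℤ) • x)) = (n : ℝ) * cx := by
    intro n
    rw [hicn n, hnrm.smul]
    simp [hcxdef]
  have hnx : ∀ n : ℕ, n ≠ 0 → (n : ℤ) • x ≠ 0 := by
    intro n hn h
    apply hx
    funext i
    have := congrFun h i
    simp only [Pi.smul_apply, smul_eq_mul, Pi.zero_apply] at this
    rcases mul_eq_zero.1 this with h' | h'
    · exact absurd (by exact_mod_cast h') hn
    · simpa using h'
  -- KRW upper bound
  have key : ∀ n : ℕ, KRW a (Jw nrm ψ) 0 ((n : ℤ) • x)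
      ≤ ENNReal.ofReal (Real.exp (-((n : ℝ) * cx))) * ENNReal.ofReal M := by
    intro n
    unfold KRW
    set g' : (Fin d → ℤ) → ℝ≥0∞ := fun s =>
      if s = 0 then 0 else ENNReal.ofReal (a * (ψ s * Real.exp (-(scharge nrm t s)))) with hg'
    have hterm : ∀ l : {l : List (Fin d → ℤ) //
        (∀ s ∈ l, s ≠ 0) ∧ l.sum = (n : ℤ) • x - 0},
        (l.1.map (fun s => ENNReal.ofReal (a * Jw nrm ψ s))).prod
          = ENNReal.ofReal (Real.exp (-((n : ℝ) * cx))) * (l.1.map g').prod := by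
      intro l
      obtain ⟨hl0, hlsum⟩ := l.2
      have hJnn : ∀ s ∈ l.1, 0 ≤ a * Jw nrm ψ s := by
        intro s hs
        have hs0 := hl0 s hs
        have := hψ.pos s hs0
        rw [Jw, if_neg hs0]
        positivity
      have hsumdot : dotR t (ic l.1.sum) = (n : ℝ) * cx := by
        rw [hlsum, sub_zero, hicn n, dotR_smul, ht.1]
      rw [list_prod_ofReal _ l.1 hJnn, tilt nrm ψ t a l.1 hl0, hsumdot,
        ENNReal.ofReal_mul (le_of_lt (Real.exp_pos _))]
      congr 1
      have hgnn : ∀ s ∈ l.1, 0 ≤ a * (ψ s * Real.exp (-(scharge nrm t s))) := by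
        intro s hs
        have := hψ.pos s (hl0 s hs)
        positivity
      rw [← list_prod_ofReal _ l.1 hgnn]
      congr 1
      refine List.map_congr_left ?_
      intro s hs
      rw [hg']
      simp only
      rw [if_neg (hl0 s hs)]
    rw [tsum_congr hterm, ENNReal.tsum_mul_left]
    refine mul_le_mul_right ?_ _
    have hsub : ∑' l : {l : List (Fin d → ℤ) //
        (∀ s ∈ l, s ≠ 0) ∧ l.sum = (n : ℤ) • x - 0}, (l.1.map g').prod
        ≤ ∑' l : List (Fin d → ℤ), (l.map g').prod :=
      ENNReal.tsum_comp_le_tsum_of_injective Subtype.val_injective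
        (fun l : List (Fin d → ℤ) => (l.map g').prod)
    refine hsub.trans ?_
    rw [tsum_list g']
    have hsg : ∑' b, g' b = ENNReal.ofReal (a * Xi) := by
      have hsup : Function.support g' ⊆ {y : Fin d → ℤ | y ≠ 0} := by
        intro y hy
        intro h0
        apply hy
        rw [hg']
        simp [h0]
      rw [← tsum_subtype_eq_of_support_subset hsup]
      have h2 : ∀ y : {y : Fin d → ℤ // y ≠ 0},
          g' y.1 = ENNReal.ofReal (a * (ψ y.1 * Real.exp (-(scharge nrm t y.1)))) := by
        intro y
        rw [hg']
        simp only
        rw [if_neg y.2]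
      have h3 : ∑' y : {y : Fin d → ℤ // y ≠ 0}, g' y.1 = ENNReal.ofReal (a * Xi) := by
        rw [tsum_congr h2, ← ENNReal.ofReal_tsum_of_nonneg
          (fun y => by have := hψ.pos y.1 y.2; positivity) (hXi.mul_left a).summable,
          (hXi.mul_left a).tsum_eq]
      exact h3
    rw [hsg]
    have h1 : (1 : ℝ≥0∞) - ENNReal.ofReal (a * Xi) = ENNReal.ofReal (1 - a * Xi) := by
      rw [ENNReal.ofReal_sub 1 (le_of_lt (mul_pos ha hXipos)), ENNReal.ofReal_one]
    rw [h1, ← ENNReal.ofReal_inv_of_pos (by linarith)]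
  -- C positive
  have hJx : 0 < Jw nrm ψ x := by
    rw [Jw, if_neg hx]
    have := hψ.pos x hx
    positivity
  have hGx : 0 < G lam 0 x := lt_of_lt_of_le (mul_pos hκ hJx) (hκJ x hx)
  have hCpos : 0 < C := by
    by_contra hC0
    push_neg at hC0
    have h1 := hC 0 x
    rw [ENNReal.ofReal_eq_zero.2 hC0, zero_mul, nonpos_iff_eq_zero,
      ENNReal.ofReal_eq_zero] at h1
    linarith
  have hCM : 0 < C * M := mul_pos hCpos hM
  -- real upper bound
  have hup : ∀ n : ℕ, G lam 0 ((n : ℤ) • x) ≤ (C * M) * Real.exp (-((n : ℝ) * cx)) := by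
    intro n
    have h1 : ENNReal.ofReal (G lam 0 ((n : ℤ) • x))
        ≤ ENNReal.ofReal ((C * M) * Real.exp (-((n : ℝ) * cx))) := by
      refine (hC 0 ((n : ℤ) • x)).trans ?_
      refine (mul_le_mul_right (key n) _).trans_eq ?_
      rw [← mul_assoc, ← ENNReal.ofReal_mul (le_of_lt hCpos),
        ← ENNReal.ofReal_mul (by positivity)]
      congr 1
      ring
    exact (ENNReal.ofReal_le_ofReal_iff (by positivity)).1 h1
  -- real lower bound
  have hlo : ∀ n : ℕ, 1 ≤ n →
      κ * (ψ ((n : ℤ) • x) * Real.exp (-((n : ℝ) * cx))) ≤ G lam 0 ((n : ℤ) • x) := by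
    intro n hn
    have h0 := hκJ ((n : ℤ) • x) (hnx n (by omega))
    rwa [Jw, if_neg (hnx n (by omega)), hnrmn n] at h0
  have hψn : ∀ n : ℕ, 1 ≤ n → 0 < ψ ((n : ℤ) • x) := fun n hn => hψ.pos _ (hnx n (by omega))
  have hGpos : ∀ n : ℕ, 1 ≤ n → 0 < G lam 0 ((n : ℤ) • x) := by
    intro n hn
    refine lt_of_lt_of_le ?_ (hlo n hn)
    have := hψn n hn
    positivity
  -- limit of log ψ (n x) / n
  have hψlim : Filter.Tendsto (fun n : ℕ => Real.log (ψ ((n : ℤ) • x)) / (n : ℝ))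
      Filter.atTop (nhds 0) := by
    have hinj : Function.Injective (fun n : ℕ => (n : ℤ) • x) := by
      intro m n h
      obtain ⟨i, hi⟩ := Function.ne_iff.1 hx
      have := congrFun h i
      simp only [Pi.smul_apply, smul_eq_mul] at this
      have : (m : ℤ) = (n : ℤ) := mul_right_cancel₀ hi this
      exact_mod_cast this
    have h1 : Filter.Tendsto (fun n : ℕ => (n : ℤ) • x) Filter.atTop Filter.cofinite := by
      rw [← Nat.cofinite_eq_atTop]
      exact hinj.tendsto_cofinite
    have h2 := hψ.subexp.comp h1
    have h3 : Filter.Tendsto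
        (fun n : ℕ => Real.log (ψ ((n : ℤ) • x)) / ((n : ℝ) * cx) * cx)
        Filter.atTop (nhds 0) := by
      have h4 : Filter.Tendsto (fun n : ℕ => Real.log (ψ ((n : ℤ) • x)) / ((n : ℝ) * cx))
          Filter.atTop (nhds 0) := by
        refine h2.congr ?_
        intro n
        simp only [Function.comp_apply]
        rw [hnrmn n]
      simpa using h4.mul_const cx
    refine h3.congr ?_
    intro n
    rw [mul_comm (n : ℝ) cx, ← div_div, div_mul_eq_mul_div,
      div_mul_cancel₀ _ (ne_of_gt hcx)]
  -- squeeze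
  have hgl : Filter.Tendsto (fun n : ℕ => cx - Real.log (C * M) / (n : ℝ))
      Filter.atTop (nhds cx) := by
    have := tendsto_const_div_atTop_nhds_zero_nat (Real.log (C * M))
    simpa using (tendsto_const_nhds (x := cx)).sub this
  have hhl : Filter.Tendsto
      (fun n : ℕ => cx - Real.log κ / (n : ℝ) - Real.log (ψ ((n : ℤ) • x)) / (n : ℝ))
      Filter.atTop (nhds cx) := by
    have h1 := tendsto_const_div_atTop_nhds_zero_nat (Real.log κ)
    have := ((tendsto_const_nhds (x := cx)).sub h1).sub hψlim
    simpa using this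
  refine tendsto_of_tendsto_of_tendsto_of_le_of_le' hgl hhl ?_ ?_
  · filter_upwards [Filter.eventually_ge_atTop 1] with n hn
    have hn0 : (0 : ℝ) < n := by exact_mod_cast hn
    have h1 : Real.log (G lam 0 ((n : ℤ) • x)) ≤ Real.log (C * M) - (n : ℝ) * cx := by
      have h2 := Real.log_le_log (hGpos n hn) (hup n)
      rwa [Real.log_mul (ne_of_gt hCM) (Real.exp_ne_zero _), Real.log_exp] at h2
    rw [show cx - Real.log (C * M) / (n : ℝ)
        = ((n : ℝ) * cx - Real.log (C * M)) / (n : ℝ) from by field_simp, ← neg_div]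
    gcongr
    linarith
  · filter_upwards [Filter.eventually_ge_atTop 1] with n hn
    have hn0 : (0 : ℝ) < n := by exact_mod_cast hn
    have hψp := hψn n hn
    have h1 : Real.log κ + Real.log (ψ ((n : ℤ) • x)) - (n : ℝ) * cx
        ≤ Real.log (G lam 0 ((n : ℤ) • x)) := by
      have h2 := Real.log_le_log (by positivity : (0:ℝ) < κ * (ψ ((n : ℤ) • x)
        * Real.exp (-((n : ℝ) * cx)))) (hlo n hn)
      rwa [Real.log_mul (ne_of_gt hκ) (by positivity), Real.log_mul (ne_of_gt hψp)
        (Real.exp_ne_zero _), Real.log_exp, ← add_assoc, ← sub_eq_add_neg] at h2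
    rw [show cx - Real.log κ / (n : ℝ) - Real.log (ψ ((n : ℤ) • x)) / (n : ℝ)
        = ((n : ℝ) * cx - Real.log κ - Real.log (ψ ((n : ℤ) • x))) / (n : ℝ) from by
          field_simp, ← neg_div]
    gcongr
    linarith
end

section
/- Let x ∈ ℤ^d \ {0} and let t be dual to x. Suppose ψ(y) = φ(|y|) for a non-increasing function φ : (0,∞) → (0,∞), and that there exist c > 0 and a ∈ (0,1] such that: (i) Σ_{y≠0} ψ(y)^a·e^{−𝔰_t(y)} < ∞, and (ii) φ(n)·φ(m) ≤ c·φ(n+m)·φ(m)^a for all real numbers 0 < m ≤ n. Set λ₀ = (c·Σ_{y≠0} ψ(y)^a·e^{−𝔰_t(y)})^{−1} > 0. Then for every λ ∈ (0, λ₀) there exists c₊ < ∞ such that G^KRW_λ(0, n·x) ≤ c₊·J_{n·x} for all n ≥ 1. -/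
open Filter Topology

/-!
Charge each walk from `0` to `z = n • x` to the walk obtained by deleting its longest step `y*`,
remembering where `y*` stood; since the steps sum to `z`, this is injective. As `t · z = |z|`, the
step lengths add up to `|z|` plus the total surcharge, so the exponential factors contribute at
most `e^{-|z|} ∏ e^{-𝔰_t(y)}` over the remaining steps. Feeding the remaining steps one at a time
into the sub-factorization, starting from `φ(|y*|)` (legitimate because `y*` is the longest step),
gives `∏ ψ(y_i) ≤ c^{k-1} φ(∑ |y_i|) ∏ ψ(y)^a ≤ c^{k-1} ψ(z) ∏ ψ(y)^a`, since `φ` is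
non-increasing and `∑ |y_i| ≥ |z|`. Summing over walks,
`G_λ(0, z) ≤ λ J_z ∑_k (k + 1) (λ c S)^k = λ J_z / (1 - λ c S)^2`.
-/

open scoped ENNReal

section ListSums

variable {α : Type*}

theorem List.prod_map_const_mul {M : Type*} [CommMonoid M] (b : M) (f : α → M) (l : List α) :
    (l.map fun s => b * f s).prod = b ^ l.length * (l.map f).prod := by
  rw [List.prod_map_mul, List.map_const', List.prod_replicate]

theorem List.prod_map_exp_neg (f : α → ℝ) (l : List α) :
    (l.map fun s => Real.exp (-f s)).prod = Real.exp (-(l.map f).sum) := by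
  induction l with
  | nil => simp
  | cons s l ih =>
    simp only [List.map_cons, List.prod_cons, List.sum_cons, ih, neg_add, Real.exp_add]

theorem ENNReal.ofReal_list_prod_map {f : α → ℝ} {l : List α} (hf : ∀ s ∈ l, 0 ≤ f s) :
    ENNReal.ofReal (l.map f).prod = (l.map fun s => ENNReal.ofReal (f s)).prod := by
  induction l with
  | nil => simp
  | cons s l ih =>
    simp only [List.map_cons, List.prod_cons]
    rw [ENNReal.ofReal_mul (hf s List.mem_cons_self),
      ih fun r hr => hf r (List.mem_cons_of_mem _ hr)]

theorem ENNReal.tsum_pi_fin_prod (v : α → ℝ≥0∞) :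
    ∀ n : ℕ, ∑' g : Fin n → α, ∏ i, v (g i) = (∑' a, v a) ^ n
  | 0 => by simp
  | n + 1 => by
    rw [← (Fin.consEquiv fun _ => α).tsum_eq, ENNReal.tsum_prod']
    simp [Fin.consEquiv, Fin.prod_univ_succ, ENNReal.tsum_mul_left, ENNReal.tsum_mul_right,
      ENNReal.tsum_pi_fin_prod v n, pow_succ']

theorem ENNReal.tsum_list_length_mul_prod_map (f : ℕ → ℝ≥0∞) (v : α → ℝ≥0∞) :
    ∑' l : List α, f l.length * (l.map v).prod = ∑' n, f n * (∑' a, v a) ^ n := by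
  rw [← List.equivSigmaTuple.symm.tsum_eq, ENNReal.tsum_sigma']
  refine tsum_congr fun n => ?_
  simp [List.equivSigmaTuple, List.map_ofFn, List.prod_ofFn, ENNReal.tsum_mul_left,
    ENNReal.tsum_pi_fin_prod]

theorem tsum_le_of_le_mul_prod_map_eraseIdx {G : Type*} [AddCommGroup G] {p : List G → Prop}
    {z : G} (hp : ∀ l, p l → l.sum = z) {F : List G → ℝ≥0∞} {v : G → ℝ≥0∞} {C : ℝ≥0∞}
    (hF : ∀ l, p l → ∃ i < l.length, F l ≤ C * ((l.eraseIdx i).map v).prod) :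
    ∑' l : {l // p l}, F l ≤ C * ∑' n : ℕ, (n + 1) * (∑' g, v g) ^ n := by
  choose i hi hFi using hF
  let e : {l // p l} → Σ l' : List G, Fin (l'.length + 1) := fun l =>
    ⟨l.1.eraseIdx (i l.1 l.2),
      ⟨i l.1 l.2, by have := hi l.1 l.2; rw [List.length_eraseIdx_of_lt this]; omega⟩⟩
  have hrecover : ∀ l, (e l).1.insertIdx (e l).2 (z - (e l).1.sum) = l.1 := fun l => by
    have hperm := List.getElem_cons_eraseIdx_perm (hi l.1 l.2)
    have hget : l.1[i l.1 l.2]'(hi l.1 l.2) = z - (l.1.eraseIdx (i l.1 l.2)).sum := by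
      rw [← hp l.1 l.2, ← hperm.sum_eq, List.sum_cons, add_sub_cancel_right]
    simp only [e, ← hget, List.insertIdx_eraseIdx_getElem]
  have he : Function.Injective e := fun l l' h =>
    Subtype.ext (by rw [← hrecover l, ← hrecover l', h])
  calc ∑' l : {l // p l}, F l
      ≤ ∑' l : {l // p l}, C * ((e l).1.map v).prod := ENNReal.tsum_le_tsum fun l => hFi l.1 l.2
    _ ≤ ∑' q : Σ l' : List G, Fin (l'.length + 1), C * (q.1.map v).prod :=
      ENNReal.tsum_comp_le_tsum_of_injective he fun q => C * (q.1.map v).prod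
    _ = C * ∑' l : List G, (l.length + 1 : ℝ≥0∞) * (l.map v).prod := by
      rw [ENNReal.tsum_sigma', ← ENNReal.tsum_mul_left]
      refine tsum_congr fun l => ?_
      simp only [tsum_fintype, Finset.sum_const, Finset.card_univ, Fintype.card_fin, nsmul_eq_mul]
      push_cast
      ring
    _ = C * ∑' n : ℕ, (n + 1) * (∑' g, v g) ^ n := by
      rw [ENNReal.tsum_list_length_mul_prod_map (fun n => (n + 1 : ℝ≥0∞))]

end ListSums

theorem mul_prod_map_le_of_subfactor {φ : ℝ → ℝ} {c a : ℝ} (hc : 0 ≤ c)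
    (hφ : ∀ r, 0 < r → 0 < φ r)
    (hfac : ∀ m n : ℝ, 0 < m → m ≤ n → φ n * φ m ≤ c * (φ (n + m) * φ m ^ a)) :
    ∀ (L : List ℝ) (N : ℝ), (∀ r ∈ L, 0 < r ∧ r ≤ N) →
      φ N * (L.map φ).prod ≤ c ^ L.length * φ (N + L.sum) * (L.map (φ · ^ a)).prod
  | [], N, _ => by simp
  | r :: L, N, hL => by
    obtain ⟨hr, hrN⟩ := hL r List.mem_cons_self
    have hL' : ∀ s ∈ L, 0 < s ∧ s ≤ N + r := fun s hs =>
      have h := hL s (List.mem_cons_of_mem _ hs)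
      ⟨h.1, by linarith⟩
    have hprod : 0 ≤ (L.map φ).prod :=
      List.prod_nonneg (by simpa using fun s hs => (hφ s (hL' s hs).1).le)
    have ih := mul_prod_map_le_of_subfactor hc hφ hfac L (N + r) hL'
    have hra : 0 ≤ c * φ r ^ a := mul_nonneg hc (Real.rpow_nonneg (hφ r hr).le a)
    calc φ N * ((r :: L).map φ).prod = (φ N * φ r) * (L.map φ).prod := by
          rw [List.map_cons, List.prod_cons, mul_assoc]
      _ ≤ c * (φ (N + r) * φ r ^ a) * (L.map φ).prod :=
        mul_le_mul_of_nonneg_right (hfac r N hr hrN) hprod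
      _ = c * φ r ^ a * (φ (N + r) * (L.map φ).prod) := by ring
      _ ≤ c * φ r ^ a * (c ^ L.length * φ (N + r + L.sum) * (L.map (φ · ^ a)).prod) :=
        mul_le_mul_of_nonneg_left ih hra
      _ = _ := by
        simp only [List.length_cons, List.sum_cons, List.map_cons, List.prod_cons]
        ring_nf

section Walks

variable {d : ℕ} {nrm : (Fin d → ℝ) → ℝ} {t : Fin d → ℝ}

theorem IsLatticeNorm.nonneg (hnrm : IsLatticeNorm d nrm) (v : Fin d → ℝ) : 0 ≤ nrm v := by
  have h := hnrm.add_le v (-v)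
  rw [add_neg_cancel, (hnrm.eq_zero 0).2 rfl, show -v = (-1 : ℝ) • v by simp, hnrm.smul] at h
  norm_num at h
  linarith

theorem IsLatticeNorm.pos_ic (hnrm : IsLatticeNorm d nrm) {y : Fin d → ℤ} (hy : y ≠ 0) :
    0 < nrm (ic y) := by
  refine (hnrm.nonneg _).lt_of_ne fun h => hy ?_
  funext i
  simpa [ic] using congrFun ((hnrm.eq_zero _).1 h.symm) i

theorem sum_map_dotR_ic (t : Fin d → ℝ) (l : List (Fin d → ℤ)) :
    (l.map fun s => dotR t (ic s)).sum = dotR t (ic l.sum) :=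
  (map_list_sum (AddMonoidHom.mk' (fun s => dotR t (ic s)) fun y z => by
    simp [dotR, ic, mul_add, Finset.sum_add_distrib]) l).symm

theorem IsDual.scharge_nonneg {u : Fin d → ℝ} (ht : IsDual nrm t u) (y : Fin d → ℤ) :
    0 ≤ scharge nrm t y :=
  sub_nonneg.2 (ht.2 (ic y))

theorem IsDual.natCast_zsmul (hnrm : IsLatticeNorm d nrm) {x : Fin d → ℤ}
    (ht : IsDual nrm t (ic x)) (n : ℕ) : IsDual nrm t (ic ((n : ℤ) • x)) := by
  have hic : ic ((n : ℤ) • x) = (n : ℝ) • ic x := by funext i; simp [ic]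
  refine ⟨?_, ht.2⟩
  rw [hic, hnrm.smul, Nat.abs_cast, ← ht.1]
  exact dotProduct_smul (n : ℝ) t (ic x)

theorem sum_map_nrm_ic_eq {z : Fin d → ℤ} (ht : IsDual nrm t (ic z))
    {l : List (Fin d → ℤ)} (hl : l.sum = z) :
    (l.map fun s => nrm (ic s)).sum = nrm (ic z) + (l.map (scharge nrm t)).sum := by
  rw [← ht.1, ← hl, ← sum_map_dotR_ic, ← List.sum_map_add]
  simp [scharge]

theorem nrm_ic_le_sum_map_nrm_ic {z : Fin d → ℤ} (ht : IsDual nrm t (ic z))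
    {l : List (Fin d → ℤ)} (hl : l.sum = z) : nrm (ic z) ≤ (l.map fun s => nrm (ic s)).sum := by
  rw [sum_map_nrm_ic_eq ht hl, le_add_iff_nonneg_right]
  exact List.sum_nonneg (by simpa using fun s _ => ht.scharge_nonneg s)

structure IsSubfactorProfile (φ : ℝ → ℝ) (c a : ℝ) : Prop where
  pos : ∀ r, 0 < r → 0 < φ r
  anti : ∀ r s, 0 < r → r ≤ s → φ s ≤ φ r
  subfactor : ∀ m n : ℝ, 0 < m → m ≤ n → φ n * φ m ≤ c * (φ (n + m) * φ m ^ a)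

noncomputable def surchargeWeight (nrm : (Fin d → ℝ) → ℝ) (ψ : (Fin d → ℤ) → ℝ)
    (t : Fin d → ℝ) (a : ℝ) (y : Fin d → ℤ) : ℝ :=
  ψ y ^ a * Real.exp (-scharge nrm t y)

theorem pos_of_radial {ψ : (Fin d → ℤ) → ℝ} {φ : ℝ → ℝ} (hnrm : IsLatticeNorm d nrm)
    (hψφ : ∀ y, y ≠ 0 → ψ y = φ (nrm (ic y))) (hφpos : ∀ r, 0 < r → 0 < φ r)
    (y : Fin d → ℤ) (hy : y ≠ 0) : 0 < ψ y :=
  (hψφ y hy).symm ▸ hφpos _ (hnrm.pos_ic hy)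

theorem Jw_nonneg {ψ : (Fin d → ℤ) → ℝ} (hψ : ∀ y, y ≠ 0 → 0 < ψ y) (y : Fin d → ℤ) :
    0 ≤ Jw nrm ψ y := by
  unfold Jw
  split_ifs with hy
  · exact le_rfl
  · exact mul_nonneg (hψ y hy).le (Real.exp_pos _).le

theorem prod_map_exp_neg_nrm_le {z : Fin d → ℤ} (ht : IsDual nrm t (ic z))
    {l : List (Fin d → ℤ)} (hl : l.sum = z) {i : ℕ} (hi : i < l.length) :
    (l.map fun s => Real.exp (-nrm (ic s))).prod ≤
      Real.exp (-nrm (ic z)) * ((l.eraseIdx i).map fun s => Real.exp (-scharge nrm t s)).prod := by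
  have hperm := List.getElem_cons_eraseIdx_perm hi
  rw [List.prod_map_exp_neg, List.prod_map_exp_neg, ← Real.exp_add, Real.exp_le_exp,
    sum_map_nrm_ic_eq ht hl, ← (hperm.map _).sum_eq, List.map_cons, List.sum_cons]
  linarith [ht.scharge_nonneg l[i]]

theorem prod_map_le_of_subfactor {ψ : (Fin d → ℤ) → ℝ} {φ : ℝ → ℝ} {c a : ℝ}
    (hnrm : IsLatticeNorm d nrm) (hψφ : ∀ y, y ≠ 0 → ψ y = φ (nrm (ic y)))
    (hφ : IsSubfactorProfile φ c a) (hc : 0 ≤ c)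
    {z : Fin d → ℤ} (hz : z ≠ 0) (ht : IsDual nrm t (ic z))
    {l : List (Fin d → ℤ)} (hl0 : ∀ s ∈ l, s ≠ 0) (hl : l.sum = z) {i : ℕ} (hi : i < l.length)
    (hmax : ∀ s ∈ l, nrm (ic s) ≤ nrm (ic l[i])) :
    (l.map ψ).prod ≤ c ^ (l.eraseIdx i).length * ψ z * ((l.eraseIdx i).map (ψ · ^ a)).prod := by
  set l' := l.eraseIdx i
  have hperm : (l[i] :: l').Perm l := List.getElem_cons_eraseIdx_perm hi
  have hmem : ∀ s ∈ l', s ∈ l := fun s => List.mem_of_mem_eraseIdx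
  have hψ' : ∀ s ∈ l', ψ s = φ (nrm (ic s)) := fun s hs => hψφ s (hl0 s (hmem s hs))
  have hsum : nrm (ic z) ≤ nrm (ic l[i]) + (l'.map fun s => nrm (ic s)).sum := by
    have h := nrm_ic_le_sum_map_nrm_ic ht hl
    rwa [← (hperm.map _).sum_eq, List.map_cons, List.sum_cons] at h
  have key := mul_prod_map_le_of_subfactor hc hφ.pos hφ.subfactor (l'.map fun s => nrm (ic s))
    (nrm (ic l[i])) (by simpa using fun s hs =>
      ⟨hnrm.pos_ic (hl0 s (hmem s hs)), hmax s (hmem s hs)⟩)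
  rw [List.map_map, List.map_map, List.length_map] at key
  calc (l.map ψ).prod = φ (nrm (ic l[i])) * (l'.map (φ ∘ fun s => nrm (ic s))).prod := by
        rw [← (hperm.map ψ).prod_eq, List.map_cons, List.prod_cons,
          hψφ _ (hl0 _ (List.getElem_mem hi)), List.map_congr_left hψ']
        rfl
    _ ≤ _ := key
    _ ≤ c ^ l'.length * ψ z * (l'.map (ψ · ^ a)).prod := by
        have hpow : l'.map (ψ · ^ a) = l'.map ((φ · ^ a) ∘ fun s => nrm (ic s)) :=
          List.map_congr_left fun s hs => by simp [hψ' s hs]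
        rw [hψφ z hz, hpow]
        have hnonneg : ∀ s ∈ l', 0 ≤ φ (nrm (ic s)) ^ a := fun s hs =>
          Real.rpow_nonneg (hφ.pos _ (hnrm.pos_ic (hl0 s (hmem s hs)))).le a
        gcongr
        · exact List.prod_nonneg (by simpa using hnonneg)
        · exact hφ.anti _ _ (hnrm.pos_ic hz) hsum

theorem prod_map_Jw_le {ψ : (Fin d → ℤ) → ℝ} {φ : ℝ → ℝ} {c a : ℝ}
    (hnrm : IsLatticeNorm d nrm) (hψφ : ∀ y, y ≠ 0 → ψ y = φ (nrm (ic y)))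
    (hφ : IsSubfactorProfile φ c a) (hc : 0 ≤ c)
    {z : Fin d → ℤ} (hz : z ≠ 0) (ht : IsDual nrm t (ic z))
    {l : List (Fin d → ℤ)} (hl0 : ∀ s ∈ l, s ≠ 0) (hl : l.sum = z) {i : ℕ} (hi : i < l.length)
    (hmax : ∀ s ∈ l, nrm (ic s) ≤ nrm (ic l[i])) :
    (l.map (Jw nrm ψ)).prod ≤
      Jw nrm ψ z * ((l.eraseIdx i).map fun s => c * surchargeWeight nrm ψ t a s).prod := by
  set l' := l.eraseIdx i
  have hψ := pos_of_radial hnrm hψφ hφ.pos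
  have hJ : l.map (Jw nrm ψ) = l.map fun s => ψ s * Real.exp (-nrm (ic s)) :=
    List.map_congr_left fun s hs => if_neg (hl0 s hs)
  have hψa : ∀ s ∈ l', 0 ≤ ψ s ^ a := fun s hs =>
    Real.rpow_nonneg (hψ s (hl0 s (List.mem_of_mem_eraseIdx hs))).le a
  have hpow : 0 ≤ (l'.map (ψ · ^ a)).prod := List.prod_nonneg (by simpa using hψa)
  have hexp : 0 ≤ (l.map fun s => Real.exp (-nrm (ic s))).prod :=
    List.prod_nonneg (by simpa using fun s _ => (Real.exp_pos _).le)
  calc (l.map (Jw nrm ψ)).prod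
      = (l.map ψ).prod * (l.map fun s => Real.exp (-nrm (ic s))).prod := by
        rw [hJ, List.prod_map_mul]
    _ ≤ (c ^ l'.length * ψ z * (l'.map (ψ · ^ a)).prod) *
          (Real.exp (-nrm (ic z)) * (l'.map fun s => Real.exp (-scharge nrm t s)).prod) :=
        mul_le_mul (prod_map_le_of_subfactor hnrm hψφ hφ hc hz ht hl0 hl hi hmax)
          (prod_map_exp_neg_nrm_le ht hl hi) hexp
          (mul_nonneg (mul_nonneg (pow_nonneg hc _) (hψ z hz).le) hpow)
    _ = _ := by
        unfold surchargeWeight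
        rw [Jw, if_neg hz, List.prod_map_const_mul, List.prod_map_mul]
        ring

theorem KRW_le_mul_tsum {ψ : (Fin d → ℤ) → ℝ} {φ : ℝ → ℝ} {c a : ℝ}
    (hnrm : IsLatticeNorm d nrm) (hψφ : ∀ y, y ≠ 0 → ψ y = φ (nrm (ic y)))
    (hφ : IsSubfactorProfile φ c a) (hc : 0 ≤ c)
    {z : Fin d → ℤ} (hz : z ≠ 0) (ht : IsDual nrm t (ic z)) {lam : ℝ} (hlam : 0 ≤ lam) :
    KRW lam (Jw nrm ψ) 0 z ≤ ENNReal.ofReal (lam * Jw nrm ψ z) *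
      ∑' n : ℕ, (n + 1) * (∑' s : {s : Fin d → ℤ // s ≠ 0},
        ENNReal.ofReal (lam * c * surchargeWeight nrm ψ t a s)) ^ n := by
  have hψ := pos_of_radial hnrm hψφ hφ.pos
  set w : (Fin d → ℤ) → ℝ := fun s => lam * c * surchargeWeight nrm ψ t a s with hw_def
  rw [show (∑' s : {s : Fin d → ℤ // s ≠ 0}, ENNReal.ofReal (w s)) =
      ∑' s, {s | s ≠ 0}.indicator (fun s => ENNReal.ofReal (w s)) s from
      tsum_subtype {s | s ≠ 0} fun s => ENNReal.ofReal (w s)]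
  unfold KRW
  refine tsum_le_of_le_mul_prod_map_eraseIdx
    (p := fun l => (∀ s ∈ l, s ≠ 0) ∧ l.sum = z - 0)
    (F := fun l => (l.map fun s => ENNReal.ofReal (lam * Jw nrm ψ s)).prod)
    (v := {s | s ≠ 0}.indicator fun s => ENNReal.ofReal (w s)) (fun l hl => hl.2)
    fun l ⟨hl0, hl⟩ => ?_
  rw [sub_zero] at hl
  have hne : l ≠ [] := by rintro rfl; exact hz (by simpa using hl.symm)
  obtain ⟨m, hm, hmax⟩ := l.toFinset.exists_max_image (fun s => nrm (ic s))
    ((List.toFinset_nonempty_iff l).2 hne)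
  obtain ⟨i, hi, rfl⟩ := List.mem_iff_getElem.1 (List.mem_toFinset.1 hm)
  refine ⟨i, hi, ?_⟩
  have hlen : l.length = (l.eraseIdx i).length + 1 := by
    rw [List.length_eraseIdx_of_lt hi]; omega
  have hw : ∀ s ∈ l.eraseIdx i, 0 ≤ w s := fun s hs => mul_nonneg (mul_nonneg hlam hc)
    (mul_nonneg (Real.rpow_nonneg (hψ s (hl0 s (List.mem_of_mem_eraseIdx hs))).le a)
      (Real.exp_pos _).le)
  rw [List.map_congr_left fun s hs => Set.indicator_of_mem (hl0 s (List.mem_of_mem_eraseIdx hs)) _,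
    ← ENNReal.ofReal_list_prod_map hw,
    ← ENNReal.ofReal_list_prod_map fun s _ => mul_nonneg hlam (Jw_nonneg hψ s),
    ← ENNReal.ofReal_mul (mul_nonneg hlam (Jw_nonneg hψ z))]
  refine ENNReal.ofReal_le_ofReal ?_
  calc (l.map fun s => lam * Jw nrm ψ s).prod = lam ^ l.length * (l.map (Jw nrm ψ)).prod :=
        List.prod_map_const_mul _ _ _
    _ ≤ lam ^ l.length * (Jw nrm ψ z *
          ((l.eraseIdx i).map fun s => c * surchargeWeight nrm ψ t a s).prod) :=
        mul_le_mul_of_nonneg_left (prod_map_Jw_le hnrm hψφ hφ hc hz ht hl0 hl hi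
          fun s hs => hmax s (List.mem_toFinset.2 hs)) (pow_nonneg hlam _)
    _ = lam * Jw nrm ψ z * ((l.eraseIdx i).map w).prod := by
        simp only [hw_def, List.prod_map_const_mul, hlen]
        ring

end Walks

theorem ENNReal.tsum_ofReal_const_mul {ι : Type*} {f : ι → ℝ} {S : ℝ} (hf : HasSum f S)
    (hf0 : ∀ i, 0 ≤ f i) {b : ℝ} (hb : 0 ≤ b) :
    ∑' i, ENNReal.ofReal (b * f i) = ENNReal.ofReal (b * S) := by
  rw [← (hf.mul_left b).tsum_eq,
    ENNReal.ofReal_tsum_of_nonneg (fun i => mul_nonneg hb (hf0 i)) (hf.mul_left b).summable]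

theorem ENNReal.tsum_succ_mul_ofReal_pow {ρ : ℝ} (h0 : 0 ≤ ρ) (h1 : ρ < 1) :
    ∑' n : ℕ, ((n : ℝ≥0∞) + 1) * ENNReal.ofReal ρ ^ n = ENNReal.ofReal (1 / (1 - ρ) ^ 2) := by
  have h := hasSum_choose_mul_geometric_of_norm_lt_one 1 (r := ρ)
    (by rwa [Real.norm_eq_abs, abs_of_nonneg h0])
  simp only [Nat.choose_one_right, Nat.cast_add, Nat.cast_one, Nat.reduceAdd] at h
  rw [← h.tsum_eq, ENNReal.ofReal_tsum_of_nonneg (fun n => by positivity) h.summable]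
  refine tsum_congr fun n => ?_
  rw [ENNReal.ofReal_mul (by positivity), ENNReal.ofReal_pow h0, ENNReal.ofReal_add (by positivity)
    zero_le_one, ENNReal.ofReal_natCast, ENNReal.ofReal_one]

theorem statement10_general {d : ℕ}
    (nrm : (Fin d → ℝ) → ℝ) (hnrm : IsLatticeNorm d nrm)
    (ψ : (Fin d → ℤ) → ℝ)
    (x : Fin d → ℤ) (hx : x ≠ 0)
    (t : Fin d → ℝ) (ht : IsDual nrm t (ic x))
    (φ : ℝ → ℝ) (hφpos : ∀ r : ℝ, 0 < r → 0 < φ r)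
    (hφanti : ∀ r s : ℝ, 0 < r → r ≤ s → φ s ≤ φ r)
    (hψdef : ∀ y : Fin d → ℤ, y ≠ 0 → ψ y = φ (nrm (ic y)))
    (c a : ℝ) (hc : 0 < c)
    (S : ℝ)
    (hS : HasSum (fun y : {y : Fin d → ℤ // y ≠ 0} =>
      Real.rpow (ψ y.1) a * Real.exp (-(scharge nrm t y.1))) S)
    (hfac : ∀ m n : ℝ, 0 < m → m ≤ n →
      φ n * φ m ≤ c * (φ (n + m) * Real.rpow (φ m) a)) :
    0 < (c * S)⁻¹ ∧
    ∀ lam : ℝ, 0 < lam → lam < (c * S)⁻¹ →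
      ∃ cp : ℝ, ∀ n : ℕ, 1 ≤ n →
        KRW lam (Jw nrm ψ) 0 ((n : ℤ) • x) ≤
          ENNReal.ofReal (cp * Jw nrm ψ ((n : ℤ) • x)) := by
  have hψ := pos_of_radial hnrm hψdef hφpos
  have hS' : HasSum (fun s : {s : Fin d → ℤ // s ≠ 0} => surchargeWeight nrm ψ t a s) S := hS
  have hw : ∀ y : {y : Fin d → ℤ // y ≠ 0}, 0 < surchargeWeight nrm ψ t a y := fun y =>
    mul_pos (Real.rpow_pos_of_pos (hψ _ y.2) a) (Real.exp_pos _)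
  have hS_pos : 0 < S := hS'.tsum_eq ▸ hS'.summable.tsum_pos (fun y => (hw y).le) ⟨x, hx⟩ (hw _)
  have hcS := mul_pos hc hS_pos
  refine ⟨inv_pos.2 hcS, fun lam hlam0 hlam1 => ⟨lam / (1 - lam * c * S) ^ 2, fun n hn => ?_⟩⟩
  have hρ : lam * c * S < 1 := by
    have := mul_lt_mul_of_pos_right hlam1 hcS
    rwa [inv_mul_cancel₀ hcS.ne', ← mul_assoc] at this
  have hz : (n : ℤ) • x ≠ 0 := smul_ne_zero (by exact_mod_cast (by omega : n ≠ 0)) hx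
  calc KRW lam (Jw nrm ψ) 0 ((n : ℤ) • x)
      ≤ ENNReal.ofReal (lam * Jw nrm ψ ((n : ℤ) • x)) * ∑' k : ℕ, (k + 1) *
          (∑' s : {s : Fin d → ℤ // s ≠ 0},
            ENNReal.ofReal (lam * c * surchargeWeight nrm ψ t a s)) ^ k :=
        KRW_le_mul_tsum hnrm hψdef ⟨hφpos, hφanti, hfac⟩ hc.le hz (ht.natCast_zsmul hnrm n)
          hlam0.le
    _ = ENNReal.ofReal (lam * Jw nrm ψ ((n : ℤ) • x)) *
          ENNReal.ofReal (1 / (1 - lam * c * S) ^ 2) := by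
        rw [ENNReal.tsum_ofReal_const_mul hS' (fun y => (hw y).le) (by positivity),
          ENNReal.tsum_succ_mul_ofReal_pow (by positivity) hρ]
    _ = ENNReal.ofReal (lam / (1 - lam * c * S) ^ 2 * Jw nrm ψ ((n : ℤ) • x)) := by
        rw [← ENNReal.ofReal_mul (mul_nonneg hlam0.le (Jw_nonneg hψ _))]
        ring_nf

/-- For a radially non-increasing prefactor `ψ = φ∘|·|` satisfying
the sub-factorization property `φ(n)φ(m) ≤ c φ(n+m) φ(m)^a` and
`Σ_{y≠0} ψ(y)^a e^{-𝔰_t(y)} < ∞`, for every `λ ∈ (0, λ₀)` with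
`λ₀ = (c Σ_{y≠0} ψ(y)^a e^{-𝔰_t(y)})⁻¹ > 0` there is `c₊ < ∞` with
`G^KRW_λ(0, n•x) ≤ c₊ J_{n•x}` for all `n ≥ 1`. -/
theorem statement10 {d : ℕ} (hd : 1 ≤ d)
    (nrm : (Fin d → ℝ) → ℝ) (hnrm : IsLatticeNorm d nrm)
    (ψ : (Fin d → ℤ) → ℝ) (hψ : IsPrefactor d nrm ψ)
    (hJ1 : HasSum (fun y : Fin d → ℤ => Jw nrm ψ y) 1)
    (x : Fin d → ℤ) (hx : x ≠ 0)
    (t : Fin d → ℝ) (ht : IsDual nrm t (ic x))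
    (φ : ℝ → ℝ) (hφpos : ∀ r : ℝ, 0 < r → 0 < φ r)
    (hφanti : ∀ r s : ℝ, 0 < r → r ≤ s → φ s ≤ φ r)
    (hψdef : ∀ y : Fin d → ℤ, y ≠ 0 → ψ y = φ (nrm (ic y)))
    (c a : ℝ) (hc : 0 < c) (ha0 : 0 < a) (ha1 : a ≤ 1)
    (S : ℝ)
    (hS : HasSum (fun y : {y : Fin d → ℤ // y ≠ 0} =>
      Real.rpow (ψ y.1) a * Real.exp (-(scharge nrm t y.1))) S)
    (hfac : ∀ m n : ℝ, 0 < m → m ≤ n →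
      φ n * φ m ≤ c * (φ (n + m) * Real.rpow (φ m) a)) :
    0 < (c * S)⁻¹ ∧
    ∀ lam : ℝ, 0 < lam → lam < (c * S)⁻¹ →
      ∃ cp : ℝ, ∀ n : ℕ, 1 ≤ n →
        KRW lam (Jw nrm ψ) 0 ((n : ℤ) • x) ≤
          ENNReal.ofReal (cp * Jw nrm ψ ((n : ℤ) • x)) :=
  statement10_general nrm hnrm ψ x hx t ht φ hφpos hφanti hψdef c a hc S hS hfac
end
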